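/- arXiv:1806.04717 — 2 statements merged into one kernel-verified Lean document; each statement's English description precedes it below -/
import Mathlib

section
/- Fix a replacement rule satisfying the Fixation Axiom and a mutational bias 0 < ν < 1. Then for each state x ∈ {0,1}^G the limit lim_{u→0} π_MSS(x) exists and equals: ν b(a) ρ_A / (ν b(a) ρ_A + (1−ν) b(A) ρ_a) if x = A; (1−ν) b(A) ρ_a / (ν b(a) ρ_A + (1−ν) b(A) ρ_a) if x = a; and 0 if x ∉ {a, A}; where ρ_A and ρ_a are the fixation probabilities for this replacement rule at u = 0. -/
/-!
Common formal scaffold for "A mathematical formalism for natural selection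
with arbitrary spatial and genetic structure" (Allen & McAvoy).

A population is a finite nonempty set `G` of genetic sites.  A state is a
subset of `G` (the set of sites occupied by allele `A`); `∅` is the
monoallelic state `a` and `Finset.univ` is the monoallelic state `A`.
A replacement event is a pair `(R, α)` with `R ⊆ G` and `α : R → G`.
-/

open Filter Topology Set

namespace NatSel

variable (G : Type) [Fintype G] [DecidableEq G]

/-- A state of the population: the set of sites holding allele `A`. -/
abbrev PopState := Finset G

/-- A replacement event `(R, α)`: the replaced set `R ⊆ G` together with the
parentage map `α : R → G`. -/
abbrev RepEvent := Σ R : Finset G, (↥R → G)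

variable {G}

/-- `x_g ∈ {0,1}` as a real number. -/
def xg (x : PopState G) (g : G) : ℝ := if g ∈ x then 1 else 0

/-- `α̃` : agrees with `α` on `R`, is the identity off `R`. -/
def tildeMap (e : RepEvent G) (g : G) : G :=
  if h : g ∈ e.1 then e.2 ⟨g, h⟩ else g

/-- `p` is a replacement rule: for each state it gives a probability
distribution over replacement events. -/
def IsRule (p : PopState G → RepEvent G → ℝ) : Prop :=
  (∀ x e, 0 ≤ p x e) ∧ ∀ x, ∑ e : RepEvent G, p x e = 1

/-- The Fixation Axiom. -/
def FixationAxiom (p : PopState G → RepEvent G → ℝ) : Prop :=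
  ∃ g : G, ∃ m : ℕ, 0 < m ∧ ∃ ev : Fin m → RepEvent G,
    (∀ k, ∀ x : PopState G, 0 < p x (ev k)) ∧
    (∃ k, g ∈ (ev k).1) ∧
    (∀ h : G, (List.ofFn fun k => tildeMap (ev k)).foldr (· ∘ ·) id h = g)

/-- `e_{gh}(x)`: marginal probability that the allele in site `h` is replaced
by a copy of the allele in site `g`, in state `x`. -/
def eMarg (p : PopState G → RepEvent G → ℝ) (g h : G) (x : PopState G) : ℝ :=
  ∑ e : RepEvent G, if hh : h ∈ e.1 then (if e.2 ⟨h, hh⟩ = g then p x e else 0) else 0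

/-- `b_g(x)`: expected offspring number (birth rate) of site `g` in state `x`. -/
def bRate (p : PopState G → RepEvent G → ℝ) (g : G) (x : PopState G) : ℝ :=
  ∑ h, eMarg p g h x

/-- `d_g(x)`: death probability of site `g` in state `x`. -/
def dProb (p : PopState G → RepEvent G → ℝ) (g : G) (x : PopState G) : ℝ :=
  ∑ h, eMarg p h g x

/-- `b(x)`: total expected offspring number in state `x`. -/
def bTot (p : PopState G → RepEvent G → ℝ) (x : PopState G) : ℝ :=
  ∑ g, bRate p g x

/-- Probability that a replaced site whose parent holds allele `parent`
(`true` = `A`) acquires allele `child`, with mutation probability `u` and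
mutational bias `ν`. -/
def siteProb (u ν : ℝ) (parent child : Bool) : ℝ :=
  (if child = parent then 1 - u else 0) + (if child = true then u * ν else u * (1 - ν))

/-- One-step transition probability `P_{x → y}` of the evolutionary Markov
chain with replacement rule `p`, mutation probability `u`, mutational bias `ν`. -/
def step (p : PopState G → RepEvent G → ℝ) (u ν : ℝ) (x y : PopState G) : ℝ :=
  ∑ e : RepEvent G, p x e *
    (if y \ e.1 = x \ e.1 then
       ∏ g ∈ e.1.attach, siteProb u ν (decide (e.2 g ∈ x)) (decide (g.1 ∈ y))
     else 0)

/-- `t`-step transition probabilities of a kernel `P`. -/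
def iterKer (P : PopState G → PopState G → ℝ) : ℕ → PopState G → PopState G → ℝ
  | 0, x, y => if x = y then 1 else 0
  | (t + 1), x, y => ∑ z : PopState G, iterKer P t x z * P z y

/-- The state obtained from `x` by the (mutation-free) replacement event `e`. -/
def applyEvent (e : RepEvent G) (x : PopState G) : PopState G :=
  Finset.univ.filter fun g => tildeMap e g ∈ x

/-- One-step transition probability of the mutation-free (`u = 0`) chain. -/
def step0 (p : PopState G → RepEvent G → ℝ) (x y : PopState G) : ℝ :=
  ∑ e : RepEvent G, if y = applyEvent e x then p x e else 0

/-- The mutant appearance distribution `μ_A`: probability `d_g(a)/b(a)` on the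
state `{g}`, for each `g ∈ G`. -/
noncomputable def muA (p : PopState G → RepEvent G → ℝ) (x : PopState G) : ℝ :=
  ∑ g : G, if x = {g} then dProb p g ∅ / bTot p ∅ else 0

/-- The mutant appearance distribution `μ_a`: probability `d_g(A)/b(A)` on the
state `G \ {g}`, for each `g ∈ G`. -/
noncomputable def mua (p : PopState G → RepEvent G → ℝ) (x : PopState G) : ℝ :=
  ∑ g : G, if x = Finset.univ \ {g} then dProb p g Finset.univ / bTot p Finset.univ else 0

/-- Fixation probability `ρ_A` (computed at `u = 0`). -/
noncomputable def rhoA (p : PopState G → RepEvent G → ℝ) (ν : ℝ) : ℝ :=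
  ∑ x : PopState G, muA p x *
    limUnder atTop (fun t => iterKer (step p 0 ν) t x Finset.univ)

/-- Fixation probability `ρ_a` (computed at `u = 0`). -/
noncomputable def rhoa (p : PopState G → RepEvent G → ℝ) (ν : ℝ) : ℝ :=
  ∑ x : PopState G, mua p x *
    limUnder atTop (fun t => iterKer (step p 0 ν) t x ∅)

/-- Frequency `x = (1/n) Σ_g x_g` of allele `A`. -/
noncomputable def freq (x : PopState G) : ℝ := (x.card : ℝ) / (Fintype.card G : ℝ)

/-- Expected change due to selection, `Δ_sel(x) = Σ_g x_g (b_g(x) − d_g(x))`. -/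
def deltaSel (p : PopState G → RepEvent G → ℝ) (x : PopState G) : ℝ :=
  ∑ g, xg x g * (bRate p g x - dProb p g x)

/-- The finset of states other than the monoallelic states `a = ∅`, `A = univ`. -/
def offStates (G : Type) [Fintype G] [DecidableEq G] : Finset (PopState G) :=
  Finset.univ.filter fun x : PopState G => x ≠ ∅ ∧ x ≠ Finset.univ

/-- Assumption 1: consistency of monoallelic states. -/
def ConsistentMono (p : PopState G → RepEvent G → ℝ) : Prop :=
  ∀ e : RepEvent G, p ∅ e = p Finset.univ e

/-- A replacement rule represents neutral drift: probabilities are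
state-independent. -/
def NeutralDrift (p : PopState G → RepEvent G → ℝ) : Prop :=
  ∀ x e, p x e = p ∅ e

/-- Reproductive values: `{v_g}` solves `d°_g v_g = Σ_h e°_{gh} v_h` (with the
monoallelic-state quantities) together with `Σ_g v_g = n`. -/
def IsRepVal (p : PopState G → RepEvent G → ℝ) (v : G → ℝ) : Prop :=
  (∀ g, dProb p g ∅ * v g = ∑ h, eMarg p g h ∅ * v h) ∧
    ∑ g, v g = (Fintype.card G : ℝ)

/-- RV-weighted birth rate `b̂_g(x) = Σ_h e_{gh}(x) v_h`. -/
def bHat (p : PopState G → RepEvent G → ℝ) (v : G → ℝ) (g : G) (x : PopState G) : ℝ :=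
  ∑ h, eMarg p g h x * v h

/-- RV-weighted death rate `d̂_g(x) = v_g d_g(x)`. -/
def dHat (p : PopState G → RepEvent G → ℝ) (v : G → ℝ) (g : G) (x : PopState G) : ℝ :=
  v g * dProb p g x

/-- Total RV-weighted birth rate `b̂(x)`. -/
def bHatTot (p : PopState G → RepEvent G → ℝ) (v : G → ℝ) (x : PopState G) : ℝ :=
  ∑ g, bHat p v g x

/-- RV-weighted change due to selection `Δ̂_sel(x) = Σ_g x_g (b̂_g(x) − d̂_g(x))`. -/
def deltaHatSel (p : PopState G → RepEvent G → ℝ) (v : G → ℝ) (x : PopState G) : ℝ :=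
  ∑ g, xg x g * (bHat p v g x - dHat p v g x)

/-- Fitness `w_g(x) = v_g − d̂_g(x) + b̂_g(x)`. -/
def fitness (p : PopState G → RepEvent G → ℝ) (v : G → ℝ) (g : G) (x : PopState G) : ℝ :=
  v g - dHat p v g x + bHat p v g x

/-- RV-weighted frequency `x̂ = (1/n) Σ_g v_g x_g`. -/
noncomputable def freqHat (v : G → ℝ) (x : PopState G) : ℝ :=
  (∑ g, v g * xg x g) / (Fintype.card G : ℝ)

/-- `{π u}_{0<u≤1}` is, for each mutation probability `0 < u ≤ 1`, a stationary
distribution of the evolutionary Markov chain (i.e. the mutation-selection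
stationary distribution, which is unique by ergodicity). -/
def IsMSSFamily (p : PopState G → RepEvent G → ℝ) (ν : ℝ)
    (π : ℝ → PopState G → ℝ) : Prop :=
  ∀ u, u ∈ Set.Ioc (0 : ℝ) 1 →
    (∀ x, 0 ≤ π u x) ∧ (∑ x : PopState G, π u x = 1) ∧
      ∀ y, π u y = ∑ x : PopState G, π u x * step p u ν x y

/-- `πR` is the rare-mutation conditional (RMC) distribution associated with
the MSS family `π`: for each non-monoallelic state `x`,
`πR x = lim_{u→0} π_MSS(x)/(1 − π_MSS(A) − π_MSS(a))`. -/
def IsRMC (π : ℝ → PopState G → ℝ) (πR : PopState G → ℝ) : Prop :=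
  ∀ x ∈ offStates G,
    Tendsto (fun u => π u x / (1 - π u Finset.univ - π u ∅))
      (nhdsWithin 0 (Set.Ioi 0)) (nhds (πR x))

end NatSel

open NatSel Filter Topology

namespace NatSel

section Aux

variable {G : Type} [Fintype G] [DecidableEq G]
set_option linter.unusedSectionVars false

lemma mem_applyEvent {e : RepEvent G} {x : PopState G} {g : G} :
    g ∈ applyEvent e x ↔ tildeMap e g ∈ x := by
  simp [applyEvent]

lemma applyEvent_empty (e : RepEvent G) : applyEvent e (∅ : PopState G) = ∅ := by
  ext g; simp [mem_applyEvent]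

lemma applyEvent_univ (e : RepEvent G) :
    applyEvent e (Finset.univ : PopState G) = Finset.univ := by
  ext g; simp [mem_applyEvent]

lemma tildeMap_of_mem {e : RepEvent G} {g : G} (h : g ∈ e.1) :
    tildeMap e g = e.2 ⟨g, h⟩ := by simp [tildeMap, h]

lemma tildeMap_of_not_mem {e : RepEvent G} {g : G} (h : g ∉ e.1) :
    tildeMap e g = g := by simp [tildeMap, h]

lemma siteProb_zero (ν : ℝ) (pc cc : Bool) :
    siteProb 0 ν pc cc = if cc = pc then 1 else 0 := by
  cases cc <;> cases pc <;> simp [siteProb]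

/-- The `u = 0` chain moves by applying a mutation-free replacement event. -/
lemma step_zero_eq (p : PopState G → RepEvent G → ℝ) (ν : ℝ) (x y : PopState G) :
    step p 0 ν x y = ∑ e : RepEvent G, if y = applyEvent e x then p x e else 0 := by
  unfold step
  refine Finset.sum_congr rfl fun e _ => ?_
  have hd : (if y \ e.1 = x \ e.1 then
      ∏ g ∈ e.1.attach, siteProb 0 ν (decide (e.2 g ∈ x)) (decide (g.1 ∈ y)) else 0)
      = if y = applyEvent e x then 1 else 0 := by
    by_cases hy : y = applyEvent e x
    · subst hy
      rw [if_pos, if_pos rfl]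
      · refine Finset.prod_eq_one fun g _ => ?_
        rw [siteProb_zero, if_pos]
        have : g.1 ∈ applyEvent e x ↔ e.2 g ∈ x := by
          rw [mem_applyEvent, tildeMap_of_mem g.2]
        exact decide_eq_decide.mpr this
      · ext g
        simp only [Finset.mem_sdiff, mem_applyEvent]
        constructor
        · rintro ⟨h1, h2⟩; rw [tildeMap_of_not_mem h2] at h1; exact ⟨h1, h2⟩
        · rintro ⟨h1, h2⟩; rw [tildeMap_of_not_mem h2]; exact ⟨h1, h2⟩
    · rw [if_neg hy]
      by_cases hc : y \ e.1 = x \ e.1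
      · rw [if_pos hc]
        -- there is a site where y disagrees with the deterministic update
        have : ¬ (∀ g ∈ e.1, (g ∈ y ↔ tildeMap e g ∈ x)) := by
          intro hall
          apply hy
          ext g
          rw [mem_applyEvent]
          by_cases hg : g ∈ e.1
          · exact hall g hg
          · rw [tildeMap_of_not_mem hg]
            constructor
            · intro h
              have : g ∈ y \ e.1 := Finset.mem_sdiff.2 ⟨h, hg⟩
              rw [hc] at this
              exact (Finset.mem_sdiff.1 this).1
            · intro h
              have : g ∈ x \ e.1 := Finset.mem_sdiff.2 ⟨h, hg⟩
              rw [← hc] at this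
              exact (Finset.mem_sdiff.1 this).1
        push_neg at this
        obtain ⟨g, hg, hgd⟩ := this
        refine Finset.prod_eq_zero (Finset.mem_attach _ ⟨g, hg⟩) ?_
        rw [siteProb_zero, if_neg]
        rw [tildeMap_of_mem hg] at hgd
        by_cases h1 : g ∈ y <;> by_cases h2 : e.2 ⟨g, hg⟩ ∈ x <;>
          simp_all
      · simp [hc, hy]
  rw [hd]
  by_cases h : y = applyEvent e x <;> simp [h]

end Aux

end NatSel
namespace NatSel

section Aux2

variable {G : Type} [Fintype G] [DecidableEq G]
set_option linter.unusedSectionVars false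

/-- Transition matrix of the evolutionary Markov chain. -/
def M (p : PopState G → RepEvent G → ℝ) (u ν : ℝ) :
    Matrix (PopState G) (PopState G) ℝ := Matrix.of (step p u ν)

lemma M_apply (p : PopState G → RepEvent G → ℝ) (u ν : ℝ) (x y : PopState G) :
    M p u ν x y = step p u ν x y := rfl

lemma iterKer_eq_pow (p : PopState G → RepEvent G → ℝ) (u ν : ℝ) :
    ∀ (t : ℕ) (x y : PopState G), iterKer (step p u ν) t x y = (M p u ν ^ t) x y := by
  intro t
  induction t with
  | zero => intro x y; simp [iterKer, Matrix.one_apply]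
  | succ t ih =>
    intro x y
    rw [iterKer, pow_succ, Matrix.mul_apply]
    exact Finset.sum_congr rfl fun z _ => by rw [ih]; rfl

variable {p : PopState G → RepEvent G → ℝ} {ν : ℝ}

section M0

variable (hp : IsRule p)
include hp

lemma M0_nonneg (x y : PopState G) : 0 ≤ M p 0 ν x y := by
  rw [M_apply, step_zero_eq]
  refine Finset.sum_nonneg fun e _ => ?_
  split
  · exact hp.1 x e
  · exact le_refl 0

lemma M0_rowsum (x : PopState G) : ∑ y, M p 0 ν x y = 1 := by
  simp only [M_apply, step_zero_eq]
  rw [Finset.sum_comm]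
  rw [← hp.2 x]
  exact Finset.sum_congr rfl fun e _ => by
    rw [Finset.sum_ite_eq' Finset.univ (applyEvent e x) (fun _ => p x e),
      if_pos (Finset.mem_univ _)]

lemma M0_ge_event (e : RepEvent G) (x : PopState G) :
    p x e ≤ M p 0 ν x (applyEvent e x) := by
  rw [M_apply, step_zero_eq]
  have := Finset.single_le_sum (f := fun e' : RepEvent G =>
      if applyEvent e x = applyEvent e' x then p x e' else 0)
    (fun e' _ => by split; exacts [hp.1 x e', le_refl 0]) (Finset.mem_univ e)
  simpa using this

end M0

end Aux2

end NatSel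
namespace NatSel

section Aux3

variable {G : Type} [Fintype G] [DecidableEq G]
set_option linter.unusedSectionVars false

lemma offStates_eq :
    offStates G = Finset.univ.filter fun x : PopState G => ¬(x = ∅ ∨ x = Finset.univ) := by
  ext z; simp [offStates, not_or]

lemma mem_offStates {z : PopState G} :
    z ∈ offStates G ↔ z ≠ ∅ ∧ z ≠ Finset.univ := by
  simp [offStates]

lemma sum_split [Nonempty G] (f : PopState G → ℝ) :
    ∑ x, f x = f Finset.univ + f ∅ + ∑ x ∈ offStates G, f x := by
  have h := Finset.sum_filter_add_sum_filter_not Finset.univ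
    (fun x : PopState G => x = ∅ ∨ x = Finset.univ) f
  rw [← offStates_eq] at h
  have hne : (∅ : PopState G) ≠ Finset.univ := (Finset.univ_nonempty.ne_empty).symm
  have hset : Finset.univ.filter (fun x : PopState G => x = ∅ ∨ x = Finset.univ)
      = {∅, Finset.univ} := by
    ext z; simp [Finset.mem_insert]
  rw [hset, Finset.sum_pair hne] at h
  linarith [h]

variable {p : PopState G → RepEvent G → ℝ} {ν : ℝ}

section withRule

variable (hp : IsRule p)
include hp

lemma M0_empty (y : PopState G) :
    M p 0 ν ∅ y = if y = ∅ then 1 else 0 := by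
  rw [M_apply, step_zero_eq]
  by_cases hy : y = (∅ : PopState G)
  · subst hy
    rw [if_pos rfl, ← hp.2 ∅]
    exact Finset.sum_congr rfl fun e _ => by rw [if_pos (applyEvent_empty e).symm]
  · rw [if_neg hy]
    refine Finset.sum_eq_zero fun e _ => ?_
    rw [if_neg]
    rw [applyEvent_empty e]
    exact hy
  
lemma M0_univ (y : PopState G) :
    M p 0 ν Finset.univ y = if y = Finset.univ then 1 else 0 := by
  rw [M_apply, step_zero_eq]
  by_cases hy : y = (Finset.univ : PopState G)
  · subst hy
    rw [if_pos rfl, ← hp.2 Finset.univ]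
    exact Finset.sum_congr rfl fun e _ => by rw [if_pos (applyEvent_univ e).symm]
  · rw [if_neg hy]
    refine Finset.sum_eq_zero fun e _ => ?_
    rw [if_neg]
    rw [applyEvent_univ e]
    exact hy

lemma M0_pow_empty (t : ℕ) (y : PopState G) :
    (M p 0 ν ^ t) ∅ y = if y = ∅ then 1 else 0 := by
  induction t with
  | zero => simp [Matrix.one_apply, eq_comm]
  | succ t ih =>
    rw [pow_succ', Matrix.mul_apply]
    rw [Finset.sum_eq_single (∅ : PopState G)]
    · rw [M0_empty hp, if_pos rfl, one_mul, ih]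
    · intro z _ hz
      rw [M0_empty hp, if_neg hz, zero_mul]
    · intro h; exact absurd (Finset.mem_univ _) h

lemma M0_pow_univ_row (t : ℕ) (y : PopState G) :
    (M p 0 ν ^ t) Finset.univ y = if y = Finset.univ then 1 else 0 := by
  induction t with
  | zero => simp [Matrix.one_apply, eq_comm]
  | succ t ih =>
    rw [pow_succ', Matrix.mul_apply]
    rw [Finset.sum_eq_single (Finset.univ : PopState G)]
    · rw [M0_univ hp, if_pos rfl, one_mul, ih]
    · intro z _ hz
      rw [M0_univ hp, if_neg hz, zero_mul]
    · intro h; exact absurd (Finset.mem_univ _) h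

lemma M0_pow_nonneg (t : ℕ) (x y : PopState G) : 0 ≤ (M p 0 ν ^ t) x y := by
  induction t generalizing x y with
  | zero => rw [pow_zero, Matrix.one_apply]; split <;> norm_num
  | succ t ih =>
    rw [pow_succ, Matrix.mul_apply]
    exact Finset.sum_nonneg fun z _ => mul_nonneg (ih x z) (M0_nonneg hp z y)

lemma M0_pow_rowsum (t : ℕ) (x : PopState G) : ∑ y, (M p 0 ν ^ t) x y = 1 := by
  induction t generalizing x with
  | zero => simp [Matrix.one_apply]
  | succ t ih =>
    simp only [pow_succ', Matrix.mul_apply]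
    rw [Finset.sum_comm]
    have : ∀ z, ∑ y, M p 0 ν x z * (M p 0 ν ^ t) z y = M p 0 ν x z := by
      intro z
      rw [← Finset.mul_sum, ih z, mul_one]
    rw [Finset.sum_congr rfl fun z _ => this z]
    exact M0_rowsum hp x

lemma M0_pow_le_one (t : ℕ) (x y : PopState G) : (M p 0 ν ^ t) x y ≤ 1 := by
  rw [← M0_pow_rowsum hp t x]
  exact Finset.single_le_sum (fun z _ => M0_pow_nonneg hp t x z) (Finset.mem_univ y)

lemma M0_pow_absorbA_mono (x : PopState G) :
    Monotone fun t => (M p 0 ν ^ t) x Finset.univ := by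
  refine monotone_nat_of_le_succ fun t => ?_
  rw [pow_succ, Matrix.mul_apply]
  have := Finset.single_le_sum
    (f := fun z => (M p 0 ν ^ t) x z * M p 0 ν z Finset.univ)
    (fun z _ => mul_nonneg (M0_pow_nonneg hp t x z) (M0_nonneg hp z _))
    (Finset.mem_univ (Finset.univ : PopState G))
  calc (M p 0 ν ^ t) x Finset.univ
      = (M p 0 ν ^ t) x Finset.univ * M p 0 ν Finset.univ Finset.univ := by
        rw [M0_univ hp, if_pos rfl, mul_one]
    _ ≤ _ := this

lemma M0_pow_absorba_mono (x : PopState G) :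
    Monotone fun t => (M p 0 ν ^ t) x ∅ := by
  refine monotone_nat_of_le_succ fun t => ?_
  rw [pow_succ, Matrix.mul_apply]
  have := Finset.single_le_sum
    (f := fun z => (M p 0 ν ^ t) x z * M p 0 ν z ∅)
    (fun z _ => mul_nonneg (M0_pow_nonneg hp t x z) (M0_nonneg hp z _))
    (Finset.mem_univ (∅ : PopState G))
  calc (M p 0 ν ^ t) x ∅
      = (M p 0 ν ^ t) x ∅ * M p 0 ν ∅ ∅ := by
        rw [M0_empty hp, if_pos rfl, mul_one]
    _ ≤ _ := this

end withRule

/-- Fixation probability function for allele `A` at `u = 0`. -/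
noncomputable def phiA (p : PopState G → RepEvent G → ℝ) (ν : ℝ) (x : PopState G) : ℝ :=
  ⨆ t : ℕ, (M p 0 ν ^ t) x Finset.univ

/-- Fixation probability function for allele `a` at `u = 0`. -/
noncomputable def phia (p : PopState G → RepEvent G → ℝ) (ν : ℝ) (x : PopState G) : ℝ :=
  ⨆ t : ℕ, (M p 0 ν ^ t) x ∅

section withRule2

variable (hp : IsRule p)
include hp

lemma tendsto_phiA (x : PopState G) :
    Filter.Tendsto (fun t => (M p 0 ν ^ t) x Finset.univ) Filter.atTop (nhds (phiA p ν x)) :=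
  tendsto_atTop_ciSup (M0_pow_absorbA_mono hp x)
    ⟨1, by rintro r ⟨t, rfl⟩; exact M0_pow_le_one hp t x _⟩

lemma tendsto_phia (x : PopState G) :
    Filter.Tendsto (fun t => (M p 0 ν ^ t) x ∅) Filter.atTop (nhds (phia p ν x)) :=
  tendsto_atTop_ciSup (M0_pow_absorba_mono hp x)
    ⟨1, by rintro r ⟨t, rfl⟩; exact M0_pow_le_one hp t x _⟩

lemma phiA_nonneg (x : PopState G) : 0 ≤ phiA p ν x :=
  ge_of_tendsto (tendsto_phiA hp x) (Filter.Eventually.of_forall fun t => M0_pow_nonneg hp t x _)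

lemma phia_nonneg (x : PopState G) : 0 ≤ phia p ν x :=
  ge_of_tendsto (tendsto_phia hp x) (Filter.Eventually.of_forall fun t => M0_pow_nonneg hp t x _)

lemma phiA_le_one (x : PopState G) : phiA p ν x ≤ 1 :=
  le_of_tendsto (tendsto_phiA hp x) (Filter.Eventually.of_forall fun t => M0_pow_le_one hp t x _)

lemma phiA_univ : phiA p ν (Finset.univ : PopState G) = 1 := by
  have h : Filter.Tendsto (fun t : ℕ => (M p 0 ν ^ t) Finset.univ Finset.univ)
      Filter.atTop (nhds 1) := by
    have : ∀ t : ℕ, (M p 0 ν ^ t) (Finset.univ : PopState G) Finset.univ = 1 := fun t => by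
      rw [M0_pow_univ_row hp, if_pos rfl]
    rw [Filter.tendsto_congr this]
    exact tendsto_const_nhds
  exact tendsto_nhds_unique (tendsto_phiA hp _) h

lemma phiA_empty [Nonempty G] : phiA p ν (∅ : PopState G) = 0 := by
  have h : Filter.Tendsto (fun t : ℕ => (M p 0 ν ^ t) ∅ Finset.univ)
      Filter.atTop (nhds 0) := by
    have heq : ∀ t : ℕ, (M p 0 ν ^ t) (∅ : PopState G) Finset.univ = 0 := fun t => by
      rw [M0_pow_empty hp, if_neg (fun h => (Finset.univ_nonempty (α := G)).ne_empty h)]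
    rw [Filter.tendsto_congr heq]
    exact tendsto_const_nhds
  exact tendsto_nhds_unique (tendsto_phiA hp _) h

lemma phiA_harmonic (x : PopState G) :
    phiA p ν x = ∑ y, M p 0 ν x y * phiA p ν y := by
  have h1 : Filter.Tendsto (fun t : ℕ => (M p 0 ν ^ (t+1)) x Finset.univ)
      Filter.atTop (nhds (phiA p ν x)) :=
    (tendsto_add_atTop_iff_nat 1).2 (tendsto_phiA hp x)
  have h2 : Filter.Tendsto (fun t : ℕ => (M p 0 ν ^ (t+1)) x Finset.univ)
      Filter.atTop (nhds (∑ y, M p 0 ν x y * phiA p ν y)) := by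
    have : ∀ t : ℕ, (M p 0 ν ^ (t+1)) x Finset.univ
        = ∑ y, M p 0 ν x y * (M p 0 ν ^ t) y Finset.univ := fun t => by
      rw [pow_succ', Matrix.mul_apply]
    rw [Filter.tendsto_congr this]
    exact tendsto_finset_sum _ fun y _ => tendsto_const_nhds.mul (tendsto_phiA hp y)
  exact tendsto_nhds_unique h1 h2

end withRule2

end Aux3

end NatSel
namespace NatSel

section Aux4

variable {G : Type} [Fintype G] [DecidableEq G]
set_option linter.unusedSectionVars false

lemma eMarg_nonneg {p : PopState G → RepEvent G → ℝ} (hp : IsRule p) (g h : G)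
    (x : PopState G) : 0 ≤ eMarg p g h x := by
  refine Finset.sum_nonneg fun e _ => ?_
  by_cases hh : h ∈ e.1
  · simp only [hh, dite_true]
    split
    exacts [hp.1 x e, le_refl 0]
  · simp [hh]

lemma dProb_eq (p : PopState G → RepEvent G → ℝ) (g : G) (x : PopState G) :
    dProb p g x = ∑ e : RepEvent G, if g ∈ e.1 then p x e else 0 := by
  rw [dProb]
  unfold eMarg
  rw [Finset.sum_comm]
  refine Finset.sum_congr rfl fun e _ => ?_
  by_cases h : g ∈ e.1
  · simp only [h, dite_true, if_true]
    rw [Finset.sum_eq_single (e.2 ⟨g, h⟩)]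
    · rw [if_pos rfl]
    · intro b _ hb; rw [if_neg (fun hh => hb hh.symm)]
    · intro hh; exact absurd (Finset.mem_univ _) hh
  · simp [h]

lemma dProb_nonneg {p : PopState G → RepEvent G → ℝ} (hp : IsRule p) (g : G)
    (x : PopState G) : 0 ≤ dProb p g x :=
  Finset.sum_nonneg fun h _ => eMarg_nonneg hp h g x

lemma bTot_eq (p : PopState G → RepEvent G → ℝ) (x : PopState G) :
    bTot p x = ∑ e : RepEvent G, p x e * e.1.card := by
  rw [bTot]
  unfold bRate eMarg
  rw [Finset.sum_comm]
  have hinner : ∀ h : G, (∑ g : G, ∑ e : RepEvent G,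
      if hh : h ∈ e.1 then (if e.2 ⟨h, hh⟩ = g then p x e else 0) else 0)
      = ∑ e : RepEvent G, if h ∈ e.1 then p x e else 0 := by
    intro h
    rw [Finset.sum_comm]
    refine Finset.sum_congr rfl fun e _ => ?_
    by_cases hh : h ∈ e.1
    · simp only [hh, dite_true, if_true]
      rw [Finset.sum_eq_single (e.2 ⟨h, hh⟩)]
      · rw [if_pos rfl]
      · intro b _ hb; rw [if_neg (fun hx => hb hx.symm)]
      · intro hc; exact absurd (Finset.mem_univ _) hc
    · simp [hh]
  rw [Finset.sum_congr rfl fun h _ => hinner h]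
  rw [Finset.sum_comm]
  refine Finset.sum_congr rfl fun e _ => ?_
  rw [Finset.sum_ite_mem, Finset.univ_inter, Finset.sum_const, nsmul_eq_mul, mul_comm]

lemma bTot_eq_sum_dProb (p : PopState G → RepEvent G → ℝ) (x : PopState G) :
    bTot p x = ∑ g : G, dProb p g x := by
  rw [bTot_eq]
  simp_rw [dProb_eq]
  rw [Finset.sum_comm]
  refine Finset.sum_congr rfl fun e _ => ?_
  rw [Finset.sum_ite_mem, Finset.univ_inter, Finset.sum_const, nsmul_eq_mul, mul_comm]

/-- Apply a list of replacement events (mutation-free), in order. -/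
def applyList : List (RepEvent G) → PopState G → PopState G
  | [], x => x
  | e :: es, x => applyList es (applyEvent e x)

lemma mem_applyList (l : List (RepEvent G)) (x : PopState G) (g : G) :
    g ∈ applyList l x ↔ (l.map tildeMap).foldr (· ∘ ·) id g ∈ x := by
  induction l generalizing x with
  | nil => simp [applyList]
  | cons e es ih =>
    simp only [applyList, List.map_cons, List.foldr_cons, Function.comp_apply]
    rw [ih, mem_applyEvent]

/-- Minimum probability of an event over all states. -/
noncomputable def cmin (p : PopState G → RepEvent G → ℝ) (e : RepEvent G) : ℝ :=
  Finset.univ.inf' ⟨∅, Finset.mem_univ ∅⟩ (fun s : PopState G => p s e)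

lemma cmin_le (p : PopState G → RepEvent G → ℝ) (e : RepEvent G) (s : PopState G) :
    cmin p e ≤ p s e := Finset.inf'_le _ (Finset.mem_univ s)

lemma cmin_pos {p : PopState G → RepEvent G → ℝ} {e : RepEvent G}
    (h : ∀ s : PopState G, 0 < p s e) : 0 < cmin p e := by
  rw [cmin]
  exact (Finset.lt_inf'_iff _).2 fun s _ => h s

lemma pow_applyList {p : PopState G → RepEvent G → ℝ} {ν : ℝ} (hp : IsRule p)
    (l : List (RepEvent G)) (x : PopState G) :
    (l.map (cmin p)).prod ≤ (M p 0 ν ^ l.length) x (applyList l x) := by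
  induction l generalizing x with
  | nil => simp [applyList, Matrix.one_apply]
  | cons e es ih =>
    simp only [List.map_cons, List.prod_cons, List.length_cons, applyList]
    rw [pow_succ', Matrix.mul_apply]
    have h1 : cmin p e * (es.map (cmin p)).prod
        ≤ M p 0 ν x (applyEvent e x) * (M p 0 ν ^ es.length) (applyEvent e x)
            (applyList es (applyEvent e x)) := by
      refine mul_le_mul ((cmin_le p e x).trans (M0_ge_event hp e x)) (ih _) ?_ ?_
      · refine List.prod_nonneg ?_
        intro r hr
        obtain ⟨e', _, rfl⟩ := List.mem_map.1 hr
        exact Finset.le_inf' _ _ fun s _ => hp.1 s e'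
      · exact M0_nonneg hp _ _
    refine h1.trans ?_
    exact Finset.single_le_sum
      (f := fun z => M p 0 ν x z * (M p 0 ν ^ es.length) z (applyList es (applyEvent e x)))
      (fun z _ => mul_nonneg (M0_nonneg hp _ _) (M0_pow_nonneg hp _ _ _))
      (Finset.mem_univ _)

end Aux4

end NatSel
namespace NatSel

section Aux5

open Filter Topology

variable {G : Type} [Fintype G] [DecidableEq G] [Nonempty G]
variable {p : PopState G → RepEvent G → ℝ} {ν : ℝ}
set_option linter.unusedSectionVars false

/-- Mass on non-monoallelic states after `t` steps of the mutation-free chain. -/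
noncomputable def rFun (p : PopState G → RepEvent G → ℝ) (ν : ℝ) (t : ℕ)
    (x : PopState G) : ℝ := ∑ w ∈ offStates G, (M p 0 ν ^ t) x w

noncomputable def RFun (p : PopState G → RepEvent G → ℝ) (ν : ℝ) (t : ℕ) : ℝ :=
  Finset.univ.sup' ⟨∅, Finset.mem_univ ∅⟩ (rFun p ν t)

lemma rFun_nonneg (hp : IsRule p) (t : ℕ) (x : PopState G) : 0 ≤ rFun p ν t x :=
  Finset.sum_nonneg fun w _ => M0_pow_nonneg hp t x w

lemma rFun_le_one (hp : IsRule p) (t : ℕ) (x : PopState G) : rFun p ν t x ≤ 1 := by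
  rw [← M0_pow_rowsum hp t x]
  exact Finset.sum_le_sum_of_subset_of_nonneg (Finset.subset_univ _)
    (fun w _ _ => M0_pow_nonneg hp t x w)

lemma rFun_le_R (t : ℕ) (x : PopState G) : rFun p ν t x ≤ RFun p ν t :=
  Finset.le_sup' _ (Finset.mem_univ x)

lemma rFun_empty (hp : IsRule p) (t : ℕ) : rFun p ν t (∅ : PopState G) = 0 :=
  Finset.sum_eq_zero fun w hw => by
    rw [M0_pow_empty hp, if_neg (mem_offStates.1 hw).1]

lemma rFun_univ (hp : IsRule p) (t : ℕ) : rFun p ν t (Finset.univ : PopState G) = 0 :=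
  Finset.sum_eq_zero fun w hw => by
    rw [M0_pow_univ_row hp, if_neg (mem_offStates.1 hw).2]

lemma RFun_nonneg (hp : IsRule p) (t : ℕ) : 0 ≤ RFun p ν t :=
  (rFun_nonneg hp t ∅).trans (rFun_le_R t ∅)

lemma RFun_le_one (hp : IsRule p) (t : ℕ) : RFun p ν t ≤ 1 :=
  Finset.sup'_le _ _ fun x _ => rFun_le_one hp t x

lemma rFun_add (s t : ℕ) (x : PopState G) :
    rFun p ν (s + t) x = ∑ z, (M p 0 ν ^ s) x z * rFun p ν t z := by
  unfold rFun
  rw [Finset.sum_congr rfl (fun w _ => by rw [pow_add, Matrix.mul_apply])]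
  rw [Finset.sum_comm]
  exact Finset.sum_congr rfl fun z _ => (Finset.mul_sum _ _ _).symm

lemma RFun_antitone (hp : IsRule p) : Antitone (RFun p ν) := by
  refine antitone_nat_of_succ_le fun t => ?_
  refine Finset.sup'_le _ _ fun x _ => ?_
  have : t + 1 = 1 + t := by omega
  rw [this, rFun_add]
  calc ∑ z, (M p 0 ν ^ 1) x z * rFun p ν t z
      ≤ ∑ z, (M p 0 ν ^ 1) x z * RFun p ν t :=
        Finset.sum_le_sum fun z _ => mul_le_mul_of_nonneg_left (rFun_le_R t z)
          (M0_pow_nonneg hp 1 x z)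
    _ = RFun p ν t := by rw [← Finset.sum_mul, M0_pow_rowsum hp, one_mul]

lemma RFun_contract (hp : IsRule p) {mm : ℕ} {c0 : ℝ} (hc0 : 0 ≤ 1 - c0)
    (hesc : ∀ x : PopState G, rFun p ν mm x ≤ 1 - c0) (t : ℕ) :
    RFun p ν (mm + t) ≤ (1 - c0) * RFun p ν t := by
  refine Finset.sup'_le _ _ fun x _ => ?_
  rw [rFun_add]
  rw [sum_split (fun z => (M p 0 ν ^ mm) x z * rFun p ν t z)]
  rw [rFun_univ hp, rFun_empty hp, mul_zero, mul_zero, add_zero, zero_add]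
  calc ∑ z ∈ offStates G, (M p 0 ν ^ mm) x z * rFun p ν t z
      ≤ ∑ z ∈ offStates G, (M p 0 ν ^ mm) x z * RFun p ν t :=
        Finset.sum_le_sum fun z _ => mul_le_mul_of_nonneg_left (rFun_le_R t z)
          (M0_pow_nonneg hp mm x z)
    _ = rFun p ν mm x * RFun p ν t := by rw [← Finset.sum_mul]; rfl
    _ ≤ (1 - c0) * RFun p ν t :=
        mul_le_mul_of_nonneg_right (hesc x) (RFun_nonneg hp t)

lemma RFun_tendsto_zero (hp : IsRule p) {mm : ℕ} (hmm : 0 < mm) {c0 : ℝ}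
    (hc0pos : 0 < c0) (hc0 : c0 ≤ 1)
    (hesc : ∀ x : PopState G, rFun p ν mm x ≤ 1 - c0) :
    Tendsto (RFun p ν) atTop (nhds 0) := by
  have hgeom : ∀ k : ℕ, RFun p ν (k * mm) ≤ (1 - c0) ^ k := by
    intro k
    induction k with
    | zero => simpa using RFun_le_one hp 0
    | succ k ih =>
      have : (k + 1) * mm = mm + k * mm := by ring
      rw [this, pow_succ]
      calc RFun p ν (mm + k * mm) ≤ (1 - c0) * RFun p ν (k * mm) :=
            RFun_contract hp (by linarith) hesc _
        _ ≤ (1 - c0) * (1 - c0) ^ k :=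
            mul_le_mul_of_nonneg_left ih (by linarith)
        _ = (1 - c0) ^ (k + 1) := by ring
  have hdiv : Tendsto (fun t : ℕ => t / mm) atTop atTop := by
    refine Filter.tendsto_atTop_atTop_of_monotone
      (fun a b hab => Nat.div_le_div_right hab) fun b => ?_
    exact ⟨b * mm, le_of_eq (Nat.mul_div_cancel b hmm).symm⟩
  have hpow : Tendsto (fun t : ℕ => (1 - c0) ^ (t / mm)) atTop (nhds 0) :=
    (tendsto_pow_atTop_nhds_zero_of_lt_one (by linarith) (by linarith)).comp hdiv
  refine tendsto_of_tendsto_of_tendsto_of_le_of_le tendsto_const_nhds hpow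
    (fun t => RFun_nonneg hp t) (fun t => ?_)
  calc RFun p ν t ≤ RFun p ν ((t / mm) * mm) :=
        RFun_antitone hp (Nat.div_mul_le_self t mm)
    _ ≤ (1 - c0) ^ (t / mm) := hgeom _

lemma phi_add (hp : IsRule p) (htR : Tendsto (RFun p ν) atTop (nhds 0))
    (x : PopState G) : phiA p ν x + phia p ν x = 1 := by
  have heq : ∀ t : ℕ, (M p 0 ν ^ t) x Finset.univ + (M p 0 ν ^ t) x ∅
      = 1 - rFun p ν t x := by
    intro t
    have := sum_split (fun y => (M p 0 ν ^ t) x y)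
    rw [M0_pow_rowsum hp t x] at this
    unfold rFun
    linarith [this]
  have h1 : Tendsto (fun t : ℕ => (M p 0 ν ^ t) x Finset.univ + (M p 0 ν ^ t) x ∅)
      atTop (nhds (phiA p ν x + phia p ν x)) :=
    (tendsto_phiA hp x).add (tendsto_phia hp x)
  have h2 : Tendsto (fun t : ℕ => 1 - rFun p ν t x) atTop (nhds (1 - 0)) := by
    refine tendsto_const_nhds.sub ?_
    exact tendsto_of_tendsto_of_tendsto_of_le_of_le tendsto_const_nhds htR
      (fun t => rFun_nonneg hp t x) (fun t => rFun_le_R t x)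
  rw [Filter.tendsto_congr heq] at h1
  have := tendsto_nhds_unique h1 h2
  linarith [this]

/-- Package of consequences of the Fixation Axiom. -/
lemma fixation_package (hp : IsRule p) (hfix : FixationAxiom p) :
    Tendsto (RFun p ν) atTop (nhds 0) ∧
    ∃ g : G, 0 < dProb p g ∅ ∧ 0 < dProb p g Finset.univ ∧
      0 < phiA p ν {g} ∧ 0 < phia p ν (Finset.univ \ {g}) ∧
      0 < bTot p ∅ ∧ 0 < bTot p Finset.univ := by
  obtain ⟨g, m, hm, ev, hev, ⟨k0, hk0⟩, hcomp⟩ := hfix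
  set l : List (RepEvent G) := List.ofFn ev with hl
  have llen : l.length = m := by simp [hl]
  have happly : ∀ x : PopState G,
      applyList l x = if g ∈ x then Finset.univ else ∅ := by
    intro x
    ext g'
    rw [mem_applyList, hl, List.map_ofFn]
    have := hcomp g'
    have heq : (List.ofFn (tildeMap ∘ ev)).foldr (· ∘ ·) id g' = g := this
    rw [heq]
    by_cases hgx : g ∈ x <;> simp [hgx]
  set c0 : ℝ := (l.map (cmin p)).prod with hc0
  have hc0pos : 0 < c0 := by
    refine List.prod_pos fun r hr => ?_
    obtain ⟨e', he', rfl⟩ := List.mem_map.1 hr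
    obtain ⟨k, rfl⟩ := List.mem_ofFn.1 he'
    exact cmin_pos (hev k)
  have hentry : ∀ x : PopState G, c0 ≤ (M p 0 ν ^ m) x (applyList l x) := by
    intro x
    have := pow_applyList (ν := ν) hp l x
    rwa [llen] at this
  have hc0le1 : c0 ≤ 1 :=
    (hentry ∅).trans (M0_pow_le_one hp m ∅ _)
  have hesc : ∀ x : PopState G, rFun p ν m x ≤ 1 - c0 := by
    intro x
    have hw0 : applyList l x ∉ offStates G := by
      rw [happly x]
      by_cases hgx : g ∈ x <;> simp [hgx, mem_offStates]
    have hins : rFun p ν m x + (M p 0 ν ^ m) x (applyList l x)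
        = ∑ w ∈ insert (applyList l x) (offStates G), (M p 0 ν ^ m) x w := by
      unfold rFun; rw [Finset.sum_insert hw0]; ring
    have hle : ∑ w ∈ insert (applyList l x) (offStates G), (M p 0 ν ^ m) x w ≤ 1 := by
      rw [← M0_pow_rowsum hp m x]
      exact Finset.sum_le_sum_of_subset_of_nonneg (Finset.subset_univ _)
        (fun w _ _ => M0_pow_nonneg hp m x w)
    have := hentry x
    linarith [hins, hle]
  refine ⟨RFun_tendsto_zero hp hm hc0pos hc0le1 hesc, g, ?_, ?_, ?_, ?_, ?_, ?_⟩
  · rw [dProb_eq]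
    have h1 : (if g ∈ (ev k0).1 then p ∅ (ev k0) else 0)
        ≤ ∑ e : RepEvent G, if g ∈ e.1 then p ∅ e else 0 :=
      Finset.single_le_sum (f := fun e : RepEvent G => if g ∈ e.1 then p ∅ e else 0)
        (fun e _ => by split; exacts [hp.1 ∅ e, le_refl 0])
        (Finset.mem_univ (ev k0))
    rw [if_pos hk0] at h1
    exact lt_of_lt_of_le (hev k0 ∅) h1
  · rw [dProb_eq]
    have h1 : (if g ∈ (ev k0).1 then p Finset.univ (ev k0) else 0)
        ≤ ∑ e : RepEvent G, if g ∈ e.1 then p Finset.univ e else 0 :=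
      Finset.single_le_sum (f := fun e : RepEvent G => if g ∈ e.1 then p Finset.univ e else 0)
        (fun e _ => by split; exacts [hp.1 _ e, le_refl 0])
        (Finset.mem_univ (ev k0))
    rw [if_pos hk0] at h1
    exact lt_of_lt_of_le (hev k0 _) h1
  · refine lt_of_lt_of_le hc0pos ?_
    have h1 := hentry {g}
    rw [happly {g}, if_pos (Finset.mem_singleton_self g)] at h1
    refine h1.trans ?_
    exact le_ciSup (f := fun t : ℕ => (M p 0 ν ^ t) {g} Finset.univ)
      ⟨1, by rintro r ⟨t, rfl⟩; exact M0_pow_le_one hp t _ _⟩ m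
  · refine lt_of_lt_of_le hc0pos ?_
    have h1 := hentry (Finset.univ \ {g})
    rw [happly _, if_neg (by simp)] at h1
    refine h1.trans ?_
    exact le_ciSup (f := fun t : ℕ => (M p 0 ν ^ t) (Finset.univ \ {g}) ∅)
      ⟨1, by rintro r ⟨t, rfl⟩; exact M0_pow_le_one hp t _ _⟩ m
  · rw [bTot_eq]
    have h1 : p ∅ (ev k0) * ((ev k0).1.card : ℝ)
        ≤ ∑ e : RepEvent G, p ∅ e * (e.1.card : ℝ) :=
      Finset.single_le_sum (f := fun e : RepEvent G => p ∅ e * (e.1.card : ℝ))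
        (fun e _ => mul_nonneg (hp.1 ∅ e) (Nat.cast_nonneg _))
        (Finset.mem_univ (ev k0))
    refine lt_of_lt_of_le ?_ h1
    have hcard : 0 < (ev k0).1.card := Finset.card_pos.2 ⟨g, hk0⟩
    have := hev k0 ∅
    positivity
  · rw [bTot_eq]
    have h1 : p Finset.univ (ev k0) * ((ev k0).1.card : ℝ)
        ≤ ∑ e : RepEvent G, p Finset.univ e * (e.1.card : ℝ) :=
      Finset.single_le_sum (f := fun e : RepEvent G => p Finset.univ e * (e.1.card : ℝ))
        (fun e _ => mul_nonneg (hp.1 _ e) (Nat.cast_nonneg _))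
        (Finset.mem_univ (ev k0))
    refine lt_of_lt_of_le ?_ h1
    have hcard : 0 < (ev k0).1.card := Finset.card_pos.2 ⟨g, hk0⟩
    have := hev k0 Finset.univ
    positivity

end Aux5

end NatSel
namespace NatSel

section Aux6

open Filter Topology

variable {G : Type} [Fintype G] [DecidableEq G]
set_option linter.unusedSectionVars false

lemma F_zero (c : ℝ) (a b : ℕ) :
    (1 - 0*c)^a * (0*c)^b = if b = 0 then 1 else 0 := by
  cases b with
  | zero => simp
  | succ b => simp [zero_pow]

lemma tendsto_term (c : ℝ) (a b : ℕ) :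
    Tendsto (fun u : ℝ => ((1 - u*c)^a * (u*c)^b - (if b = 0 then 1 else 0))/u)
      (nhdsWithin 0 (Set.Ioi 0))
      (nhds (if b = 0 then -(c*a) else if b = 1 then c else 0)) := by
  have hsub : nhdsWithin (0:ℝ) (Set.Ioi 0) ≤ nhdsWithin 0 {(0:ℝ)}ᶜ :=
    nhdsWithin_mono 0 (fun x hx => ne_of_gt hx)
  rcases Nat.lt_or_ge b 2 with hb | hb
  · interval_cases b
    · -- b = 0
      simp only [if_pos rfl, if_true, pow_zero, mul_one]
      have hd : HasDerivAt (fun u : ℝ => (1 - u*c)^a)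
          ((a:ℝ) * (1 - 0*c)^(a-1) * (-c)) 0 := by
        have h1 : HasDerivAt (fun u : ℝ => 1 - u*c) (-c) 0 := by
          simpa using ((hasDerivAt_id (0:ℝ)).mul_const c).const_sub 1
        exact h1.pow a
      rw [hasDerivAt_iff_tendsto_slope] at hd
      have : Tendsto (slope (fun u : ℝ => (1 - u*c)^a) 0)
          (nhdsWithin 0 (Set.Ioi 0)) (nhds ((a:ℝ) * (1 - 0*c)^(a-1) * (-c))) :=
        hd.mono_left hsub
      have heq : ∀ u : ℝ, slope (fun u : ℝ => (1 - u*c)^a) 0 u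
          = ((1 - u*c)^a - 1)/u := by
        intro u
        rw [slope_def_field]
        simp
      rw [tendsto_congr heq] at this
      convert this using 2
      simp
      ring
    · -- b = 1
      simp only [pow_one]
      have heq : ∀ u ∈ Set.Ioi (0:ℝ), ((1 - u*c)^a * (u*c) - (if 1 = 0 then (1:ℝ) else 0))/u
          = (1 - u*c)^a * c := by
        intro u hu
        have hu' : u ≠ 0 := ne_of_gt hu
        simp only [if_neg one_ne_zero, sub_zero]
        field_simp
      have hcont : Tendsto (fun u : ℝ => (1 - u*c)^a * c)
          (nhdsWithin 0 (Set.Ioi 0)) (nhds ((1 - 0*c)^a * c)) := by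
        apply Tendsto.mono_left _ nhdsWithin_le_nhds
        exact (Continuous.tendsto (by continuity) 0)
      have : (1 - 0*c)^a * c = c := by simp
      rw [this] at hcont
      simp only [if_neg one_ne_zero]
      refine Tendsto.congr' ?_ hcont
      filter_upwards [self_mem_nhdsWithin] with u hu
      exact (heq u hu).symm
  · -- b ≥ 2
    have hb0 : b ≠ 0 := by omega
    have hb1 : b ≠ 1 := by omega
    simp only [if_neg hb0, if_neg hb1]
    have heq : ∀ u ∈ Set.Ioi (0:ℝ), ((1 - u*c)^a * (u*c)^b - (if b = 0 then (1:ℝ) else 0))/u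
        = (1 - u*c)^a * c^b * u^(b-1) := by
      intro u hu
      have hu' : u ≠ 0 := ne_of_gt hu
      have hbb : b - 1 + 1 = b := by omega
      rw [if_neg hb0, sub_zero, mul_pow, ← hbb, pow_succ]
      field_simp
      ring_nf
      rw [Nat.add_sub_cancel_left]
    have hcont : Tendsto (fun u : ℝ => (1 - u*c)^a * c^b * u^(b-1))
        (nhdsWithin 0 (Set.Ioi 0)) (nhds ((1 - 0*c)^a * c^b * 0^(b-1))) := by
      apply Tendsto.mono_left _ nhdsWithin_le_nhds
      exact (Continuous.tendsto (by continuity) 0)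
    have hz : (1 - 0*c)^a * c^b * (0:ℝ)^(b-1) = 0 := by
      rw [zero_pow (by omega : b - 1 ≠ 0)]
      ring
    rw [hz] at hcont
    refine Tendsto.congr' ?_ hcont
    filter_upwards [self_mem_nhdsWithin] with u hu
    rw [if_neg hb0] at heq
    exact (heq u hu).symm

lemma step_univ_expand (p : PopState G → RepEvent G → ℝ) (ν u : ℝ) (y : PopState G) :
    step p u ν Finset.univ y = ∑ e : RepEvent G, p Finset.univ e *
      (if y \ e.1 = Finset.univ \ e.1 then
        (1 - u*(1-ν))^((e.1.filter (fun g => g ∈ y)).card)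
          * (u*(1-ν))^((e.1.filter (fun g => g ∉ y)).card)
       else 0) := by
  unfold step
  refine Finset.sum_congr rfl fun e _ => ?_
  congr 1
  by_cases hc : y \ e.1 = Finset.univ \ e.1
  · rw [if_pos hc, if_pos hc]
    have hfac : ∀ g ∈ e.1.attach,
        siteProb u ν (decide ((e.2 g) ∈ (Finset.univ : PopState G))) (decide (g.1 ∈ y))
          = if g.1 ∈ y then 1 - u*(1-ν) else u*(1-ν) := by
      intro g _
      have hdec : decide ((e.2 g) ∈ (Finset.univ : PopState G)) = true := by
        simp
      rw [hdec]
      by_cases hgy : g.1 ∈ y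
      · rw [if_pos hgy]
        have : decide (g.1 ∈ y) = true := by simp [hgy]
        rw [this]
        unfold siteProb
        norm_num
        ring
      · rw [if_neg hgy]
        have : decide (g.1 ∈ y) = false := by simp [hgy]
        rw [this]
        unfold siteProb
        norm_num
    rw [Finset.prod_congr rfl hfac]
    rw [Finset.prod_attach e.1 (fun g => if g ∈ y then 1 - u*(1-ν) else u*(1-ν))]
    rw [Finset.prod_ite (fun _ => 1 - u*(1-ν)) (fun _ => u*(1-ν)),
      Finset.prod_const, Finset.prod_const]
  · rw [if_neg hc, if_neg hc]

lemma step_empty_expand (p : PopState G → RepEvent G → ℝ) (ν u : ℝ) (y : PopState G) :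
    step p u ν ∅ y = ∑ e : RepEvent G, p ∅ e *
      (if y \ e.1 = (∅ : PopState G) \ e.1 then
        (1 - u*ν)^((e.1.filter (fun g => g ∉ y)).card)
          * (u*ν)^((e.1.filter (fun g => g ∈ y)).card)
       else 0) := by
  unfold step
  refine Finset.sum_congr rfl fun e _ => ?_
  congr 1
  by_cases hc : y \ e.1 = (∅ : PopState G) \ e.1
  · rw [if_pos hc, if_pos hc]
    have hfac : ∀ g ∈ e.1.attach,
        siteProb u ν (decide ((e.2 g) ∈ (∅ : PopState G))) (decide (g.1 ∈ y))
          = if g.1 ∈ y then u*ν else 1 - u*ν := by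
      intro g _
      have hdec : decide ((e.2 g) ∈ (∅ : PopState G)) = false := by
        simp
      rw [hdec]
      by_cases hgy : g.1 ∈ y
      · rw [if_pos hgy]
        have : decide (g.1 ∈ y) = true := by simp [hgy]
        rw [this]
        unfold siteProb
        norm_num
      · rw [if_neg hgy]
        have : decide (g.1 ∈ y) = false := by simp [hgy]
        rw [this]
        unfold siteProb
        norm_num
        ring
    rw [Finset.prod_congr rfl hfac]
    rw [Finset.prod_attach e.1 (fun g => if g ∈ y then u*ν else 1 - u*ν)]
    rw [Finset.prod_ite (fun _ => u*ν) (fun _ => 1 - u*ν),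
      Finset.prod_const, Finset.prod_const]
    ring
  · rw [if_neg hc, if_neg hc]

end Aux6

end NatSel
namespace NatSel

section Aux7

open Filter Topology

variable {G : Type} [Fintype G] [DecidableEq G]
set_option linter.unusedSectionVars false

/-- First-order transition rates out of the monoallelic state `A`. -/
noncomputable def cAfun (p : PopState G → RepEvent G → ℝ) (ν : ℝ) (y : PopState G) : ℝ :=
  (if y = Finset.univ then -((1-ν) * bTot p Finset.univ) else 0)
    + (1-ν) * ∑ g : G, (if y = Finset.univ \ {g} then dProb p g Finset.univ else 0)

/-- First-order transition rates out of the monoallelic state `a`. -/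
noncomputable def cafun (p : PopState G → RepEvent G → ℝ) (ν : ℝ) (y : PopState G) : ℝ :=
  (if y = ∅ then -(ν * bTot p ∅) else 0)
    + ν * ∑ g : G, (if y = {g} then dProb p g ∅ else 0)

lemma sdiff_singleton_ne_univ [Nonempty G] (g : G) :
    Finset.univ \ {g} ≠ (Finset.univ : Finset G) := by
  intro h
  have := Finset.mem_univ g
  rw [← h] at this
  simp at this

lemma tendsto_slope_univ [Nonempty G] (p : PopState G → RepEvent G → ℝ) (ν : ℝ)
    (y : PopState G) :
    Tendsto (fun u : ℝ => (step p u ν Finset.univ y - step p 0 ν Finset.univ y)/u)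
      (nhdsWithin 0 (Set.Ioi 0)) (nhds (cAfun p ν y)) := by
  classical
  set ain : RepEvent G → ℕ := fun e => (e.1.filter (fun g => g ∈ y)).card with hain
  set aout : RepEvent G → ℕ := fun e => (e.1.filter (fun g => g ∉ y)).card with haout
  set dd : RepEvent G → ℝ := fun e =>
    if y \ e.1 = Finset.univ \ e.1 then
      (if aout e = 0 then -((1-ν) * (ain e : ℝ)) else if aout e = 1 then (1-ν) else 0)
    else 0 with hdd
  have hfun : ∀ u : ℝ, (step p u ν Finset.univ y - step p 0 ν Finset.univ y)/u
      = ∑ e : RepEvent G, p Finset.univ e *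
          (((if y \ e.1 = Finset.univ \ e.1 then
               (1 - u*(1-ν))^(ain e) * (u*(1-ν))^(aout e) else 0)
            - (if y \ e.1 = Finset.univ \ e.1 then
               (1 - 0*(1-ν))^(ain e) * (0*(1-ν))^(aout e) else 0))/u) := by
    intro u
    rw [step_univ_expand p ν u y, step_univ_expand p ν 0 y, ← Finset.sum_sub_distrib,
      Finset.sum_div]
    exact Finset.sum_congr rfl fun e _ => by rw [← mul_sub, mul_div_assoc]
  have hterm : ∀ e : RepEvent G, Tendsto (fun u : ℝ => p Finset.univ e *
      (((if y \ e.1 = Finset.univ \ e.1 then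
           (1 - u*(1-ν))^(ain e) * (u*(1-ν))^(aout e) else 0)
        - (if y \ e.1 = Finset.univ \ e.1 then
           (1 - 0*(1-ν))^(ain e) * (0*(1-ν))^(aout e) else 0))/u))
      (nhdsWithin 0 (Set.Ioi 0)) (nhds (p Finset.univ e * dd e)) := by
    intro e
    by_cases hc : y \ e.1 = Finset.univ \ e.1
    · simp only [if_pos hc, hdd]
      rw [F_zero (1-ν) (ain e) (aout e)]
      exact (tendsto_term (1-ν) (ain e) (aout e)).const_mul (p Finset.univ e)
    · simp only [if_neg hc, hdd, sub_zero, zero_div, mul_zero]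
      exact tendsto_const_nhds
  have htot : Tendsto (fun u : ℝ => (step p u ν Finset.univ y - step p 0 ν Finset.univ y)/u)
      (nhdsWithin 0 (Set.Ioi 0)) (nhds (∑ e : RepEvent G, p Finset.univ e * dd e)) := by
    rw [funext hfun]
    exact tendsto_finset_sum _ fun e _ => hterm e
  suffices hsum : ∑ e : RepEvent G, p Finset.univ e * dd e = cAfun p ν y by
    rwa [hsum] at htot
  by_cases hyu : y = Finset.univ
  · subst hyu
    have hdd' : ∀ e : RepEvent G, dd e = -((1-ν) * (e.1.card : ℝ)) := by
      intro e
      have h0 : aout e = 0 := by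
        rw [haout]
        simp only
        rw [Finset.filter_false_of_mem (fun g _ => by simp), Finset.card_empty]
      have h1 : ain e = e.1.card := by
        rw [hain]
        simp only
        rw [Finset.filter_true_of_mem (fun g _ => Finset.mem_univ g)]
      rw [hdd]
      simp [h0, h1]
    rw [Finset.sum_congr rfl fun e _ => by rw [hdd' e]]
    have : ∑ e : RepEvent G, p Finset.univ e * -((1-ν) * (e.1.card : ℝ))
        = -((1-ν) * bTot p Finset.univ) := by
      rw [bTot_eq, Finset.mul_sum, ← Finset.sum_neg_distrib]
      exact Finset.sum_congr rfl fun e _ => by ring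
    rw [this, cAfun]
    have hz : ∑ g : G, (if (Finset.univ : PopState G) = Finset.univ \ {g}
        then dProb p g Finset.univ else 0) = 0 :=
      Finset.sum_eq_zero fun g _ => if_neg fun h => sdiff_singleton_ne_univ g h.symm
    rw [if_pos rfl, hz, mul_zero, add_zero]
  · by_cases hex : ∃ g0 : G, y = Finset.univ \ {g0}
    · obtain ⟨g0, rfl⟩ := hex
      have hcond : ∀ e : RepEvent G,
          (Finset.univ \ {g0}) \ e.1 = Finset.univ \ e.1 ↔ g0 ∈ e.1 := by
        intro e
        constructor
        · intro h
          by_contra hg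
          have h1 : g0 ∈ Finset.univ \ e.1 := Finset.mem_sdiff.2 ⟨Finset.mem_univ _, hg⟩
          rw [← h] at h1
          have := (Finset.mem_sdiff.1 h1).1
          simp at this
        · intro hg
          ext g
          simp only [Finset.mem_sdiff, Finset.mem_univ, true_and, Finset.mem_singleton]
          constructor
          · rintro ⟨h2, h3⟩; exact h3
          · intro h3
            exact ⟨fun heq => h3 (heq ▸ hg), h3⟩
      have hdd' : ∀ e : RepEvent G, dd e = if g0 ∈ e.1 then (1-ν) else 0 := by
        intro e
        rw [hdd]
        simp only
        by_cases hg : g0 ∈ e.1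
        · rw [if_pos ((hcond e).2 hg), if_pos hg]
          have h1 : aout e = 1 := by
            rw [haout]
            simp only
            have heq : e.1.filter (fun g => g ∉ Finset.univ \ {g0})
                = e.1.filter (fun g => g = g0) := by
              refine Finset.filter_congr fun g _ => ?_
              simp [Finset.mem_sdiff]
            rw [heq, Finset.filter_eq', if_pos hg, Finset.card_singleton]
          rw [h1]
          norm_num
        · rw [if_neg (fun h => hg ((hcond e).1 h)), if_neg hg]
      rw [Finset.sum_congr rfl fun e _ => by rw [hdd' e]]
      have hlhs : ∑ e : RepEvent G, p Finset.univ e * (if g0 ∈ e.1 then (1-ν) else 0)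
          = (1-ν) * dProb p g0 Finset.univ := by
        rw [dProb_eq, Finset.mul_sum]
        exact Finset.sum_congr rfl fun e _ => by split <;> ring
      rw [hlhs, cAfun]
      rw [if_neg (sdiff_singleton_ne_univ g0)]
      have hz : ∑ g : G, (if Finset.univ \ {g0} = Finset.univ \ {g}
          then dProb p g Finset.univ else 0) = dProb p g0 Finset.univ := by
        rw [Finset.sum_eq_single g0]
        · rw [if_pos rfl]
        · intro g _ hg
          refine if_neg fun h => ?_
          have h1 : g0 ∈ Finset.univ \ {g} :=
            Finset.mem_sdiff.2 ⟨Finset.mem_univ _, by simp [Ne.symm hg]⟩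
          rw [← h] at h1
          simp at h1
        · intro hc; exact absurd (Finset.mem_univ _) hc
      rw [hz]
      ring
    · have hdd' : ∀ e : RepEvent G, dd e = 0 := by
        intro e
        rw [hdd]
        simp only
        by_cases hc : y \ e.1 = Finset.univ \ e.1
        · rw [if_pos hc]
          have h0 : aout e ≠ 0 := by
            intro h0
            apply hyu
            have hemp : e.1.filter (fun g => g ∉ y) = ∅ := Finset.card_eq_zero.1 h0
            ext g
            simp only [Finset.mem_univ, iff_true]
            by_cases hg : g ∈ e.1
            · by_contra hgy
              have : g ∈ e.1.filter (fun g => g ∉ y) := Finset.mem_filter.2 ⟨hg, hgy⟩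
              rw [hemp] at this
              simp at this
            · have h1 : g ∈ Finset.univ \ e.1 := Finset.mem_sdiff.2 ⟨Finset.mem_univ _, hg⟩
              rw [← hc] at h1
              exact (Finset.mem_sdiff.1 h1).1
          have h1 : aout e ≠ 1 := by
            intro h1
            apply hex
            obtain ⟨g0, hfe⟩ := Finset.card_eq_one.1 h1
            refine ⟨g0, ?_⟩
            have hg0 : g0 ∈ e.1 ∧ g0 ∉ y := by
              have : g0 ∈ e.1.filter (fun g => g ∉ y) := by rw [hfe]; simp
              exact ⟨(Finset.mem_filter.1 this).1, (Finset.mem_filter.1 this).2⟩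
            ext g
            simp only [Finset.mem_sdiff, Finset.mem_univ, true_and, Finset.mem_singleton]
            constructor
            · intro hgy heq
              exact hg0.2 (heq ▸ hgy)
            · intro hne
              by_cases hg : g ∈ e.1
              · by_contra hgy
                have : g ∈ e.1.filter (fun g => g ∉ y) := Finset.mem_filter.2 ⟨hg, hgy⟩
                rw [hfe] at this
                exact hne (Finset.mem_singleton.1 this)
              · have hmem : g ∈ Finset.univ \ e.1 :=
                  Finset.mem_sdiff.2 ⟨Finset.mem_univ _, hg⟩
                rw [← hc] at hmem
                exact (Finset.mem_sdiff.1 hmem).1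
          rw [if_neg h0, if_neg h1]
        · rw [if_neg hc]
      rw [Finset.sum_congr rfl fun e _ => by rw [hdd' e]]
      rw [cAfun, if_neg hyu]
      have hz : ∑ g : G, (if y = Finset.univ \ {g} then dProb p g Finset.univ else 0) = 0 :=
        Finset.sum_eq_zero fun g _ => if_neg fun h => hex ⟨g, h⟩
      rw [hz]
      simp

end Aux7

end NatSel
namespace NatSel

section Aux8

open Filter Topology

variable {G : Type} [Fintype G] [DecidableEq G]
set_option linter.unusedSectionVars false

lemma tendsto_slope_empty [Nonempty G] (p : PopState G → RepEvent G → ℝ) (ν : ℝ)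
    (y : PopState G) :
    Tendsto (fun u : ℝ => (step p u ν ∅ y - step p 0 ν ∅ y)/u)
      (nhdsWithin 0 (Set.Ioi 0)) (nhds (cafun p ν y)) := by
  classical
  set ain : RepEvent G → ℕ := fun e => (e.1.filter (fun g => g ∈ y)).card with hain
  set aout : RepEvent G → ℕ := fun e => (e.1.filter (fun g => g ∉ y)).card with haout
  set dd : RepEvent G → ℝ := fun e =>
    if y \ e.1 = (∅ : PopState G) \ e.1 then
      (if ain e = 0 then -(ν * (aout e : ℝ)) else if ain e = 1 then ν else 0)
    else 0 with hdd
  have hfun : ∀ u : ℝ, (step p u ν ∅ y - step p 0 ν ∅ y)/u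
      = ∑ e : RepEvent G, p ∅ e *
          (((if y \ e.1 = (∅ : PopState G) \ e.1 then
               (1 - u*ν)^(aout e) * (u*ν)^(ain e) else 0)
            - (if y \ e.1 = (∅ : PopState G) \ e.1 then
               (1 - 0*ν)^(aout e) * (0*ν)^(ain e) else 0))/u) := by
    intro u
    rw [step_empty_expand p ν u y, step_empty_expand p ν 0 y, ← Finset.sum_sub_distrib,
      Finset.sum_div]
    exact Finset.sum_congr rfl fun e _ => by rw [← mul_sub, mul_div_assoc]
  have hterm : ∀ e : RepEvent G, Tendsto (fun u : ℝ => p ∅ e *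
      (((if y \ e.1 = (∅ : PopState G) \ e.1 then
           (1 - u*ν)^(aout e) * (u*ν)^(ain e) else 0)
        - (if y \ e.1 = (∅ : PopState G) \ e.1 then
           (1 - 0*ν)^(aout e) * (0*ν)^(ain e) else 0))/u))
      (nhdsWithin 0 (Set.Ioi 0)) (nhds (p ∅ e * dd e)) := by
    intro e
    by_cases hc : y \ e.1 = (∅ : PopState G) \ e.1
    · simp only [if_pos hc, hdd]
      rw [F_zero ν (aout e) (ain e)]
      exact (tendsto_term ν (aout e) (ain e)).const_mul (p ∅ e)
    · simp only [if_neg hc, hdd, sub_zero, zero_div, mul_zero]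
      exact tendsto_const_nhds
  have htot : Tendsto (fun u : ℝ => (step p u ν ∅ y - step p 0 ν ∅ y)/u)
      (nhdsWithin 0 (Set.Ioi 0)) (nhds (∑ e : RepEvent G, p ∅ e * dd e)) := by
    rw [funext hfun]
    exact tendsto_finset_sum _ fun e _ => hterm e
  suffices hsum : ∑ e : RepEvent G, p ∅ e * dd e = cafun p ν y by
    rwa [hsum] at htot
  by_cases hyu : y = (∅ : PopState G)
  · subst hyu
    have hdd' : ∀ e : RepEvent G, dd e = -(ν * (e.1.card : ℝ)) := by
      intro e
      have h0 : ain e = 0 := by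
        rw [hain]
        simp only
        rw [Finset.filter_false_of_mem (fun g _ => Finset.notMem_empty g),
          Finset.card_empty]
      have h1 : aout e = e.1.card := by
        rw [haout]
        simp only
        rw [Finset.filter_true_of_mem (fun g _ => Finset.notMem_empty g)]
      rw [hdd]
      simp [h0, h1]
    rw [Finset.sum_congr rfl fun e _ => by rw [hdd' e]]
    have : ∑ e : RepEvent G, p ∅ e * -(ν * (e.1.card : ℝ)) = -(ν * bTot p ∅) := by
      rw [bTot_eq, Finset.mul_sum, ← Finset.sum_neg_distrib]
      exact Finset.sum_congr rfl fun e _ => by ring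
    rw [this, cafun]
    have hz : ∑ g : G, (if (∅ : PopState G) = {g} then dProb p g ∅ else 0) = 0 :=
      Finset.sum_eq_zero fun g _ => if_neg fun h => (Finset.singleton_ne_empty g) h.symm
    rw [if_pos rfl, hz, mul_zero, add_zero]
  · by_cases hex : ∃ g0 : G, y = {g0}
    · obtain ⟨g0, rfl⟩ := hex
      have hcond : ∀ e : RepEvent G,
          ({g0} : PopState G) \ e.1 = (∅ : PopState G) \ e.1 ↔ g0 ∈ e.1 := by
        intro e
        rw [Finset.empty_sdiff, Finset.sdiff_eq_empty_iff_subset,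
          Finset.singleton_subset_iff]
      have hdd' : ∀ e : RepEvent G, dd e = if g0 ∈ e.1 then ν else 0 := by
        intro e
        rw [hdd]
        simp only
        by_cases hg : g0 ∈ e.1
        · rw [if_pos ((hcond e).2 hg), if_pos hg]
          have h1 : ain e = 1 := by
            rw [hain]
            simp only
            have heq : e.1.filter (fun g => g ∈ ({g0} : PopState G))
                = e.1.filter (fun g => g = g0) := by
              refine Finset.filter_congr fun g _ => ?_
              simp
            rw [heq, Finset.filter_eq', if_pos hg, Finset.card_singleton]
          rw [h1]
          norm_num
        · rw [if_neg (fun h => hg ((hcond e).1 h)), if_neg hg]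
      rw [Finset.sum_congr rfl fun e _ => by rw [hdd' e]]
      have hlhs : ∑ e : RepEvent G, p ∅ e * (if g0 ∈ e.1 then ν else 0)
          = ν * dProb p g0 ∅ := by
        rw [dProb_eq, Finset.mul_sum]
        exact Finset.sum_congr rfl fun e _ => by split <;> ring
      rw [hlhs, cafun]
      rw [if_neg (Finset.singleton_ne_empty g0)]
      have hz : ∑ g : G, (if ({g0} : PopState G) = {g} then dProb p g ∅ else 0)
          = dProb p g0 ∅ := by
        rw [Finset.sum_eq_single g0]
        · rw [if_pos rfl]
        · intro g _ hg
          exact if_neg fun h => hg (Finset.singleton_inj.1 h).symm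
        · intro hc; exact absurd (Finset.mem_univ _) hc
      rw [hz]
      ring
    · have hdd' : ∀ e : RepEvent G, dd e = 0 := by
        intro e
        rw [hdd]
        simp only
        by_cases hc : y \ e.1 = (∅ : PopState G) \ e.1
        · rw [if_pos hc]
          have hsub : y ⊆ e.1 := by
            rw [Finset.empty_sdiff, Finset.sdiff_eq_empty_iff_subset] at hc
            exact hc
          have h0 : ain e ≠ 0 := by
            intro h0
            apply hyu
            have hemp : e.1.filter (fun g => g ∈ y) = ∅ := Finset.card_eq_zero.1 h0
            rw [Finset.eq_empty_iff_forall_notMem]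
            intro g hgy
            have : g ∈ e.1.filter (fun g => g ∈ y) :=
              Finset.mem_filter.2 ⟨hsub hgy, hgy⟩
            rw [hemp] at this
            simp at this
          have h1 : ain e ≠ 1 := by
            intro h1
            apply hex
            obtain ⟨g0, hfe⟩ := Finset.card_eq_one.1 h1
            refine ⟨g0, ?_⟩
            have hg0 : g0 ∈ y := by
              have : g0 ∈ e.1.filter (fun g => g ∈ y) := by rw [hfe]; simp
              exact (Finset.mem_filter.1 this).2
            refine Finset.Subset.antisymm ?_ (Finset.singleton_subset_iff.2 hg0)
            intro g hgy
            have : g ∈ e.1.filter (fun g => g ∈ y) :=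
              Finset.mem_filter.2 ⟨hsub hgy, hgy⟩
            rw [hfe] at this
            exact this
          rw [if_neg h0, if_neg h1]
        · rw [if_neg hc]
      rw [Finset.sum_congr rfl fun e _ => by rw [hdd' e]]
      rw [cafun, if_neg hyu]
      have hz : ∑ g : G, (if y = {g} then dProb p g ∅ else 0) = 0 :=
        Finset.sum_eq_zero fun g _ => if_neg fun h => hex ⟨g, h⟩
      rw [hz]
      simp

end Aux8

end NatSel
namespace NatSel

section Aux9

open Filter Topology

variable {G : Type} [Fintype G] [DecidableEq G]
set_option linter.unusedSectionVars false

lemma abs_prod_sub_prod_le {ι : Type} [DecidableEq ι] (s : Finset ι) (f g : ι → ℝ) :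
    (∀ i ∈ s, |f i| ≤ 1) → (∀ i ∈ s, |g i| ≤ 1) →
    |∏ i ∈ s, f i - ∏ i ∈ s, g i| ≤ ∑ i ∈ s, |f i - g i| := by
  induction s using Finset.cons_induction with
  | empty => intro _ _; simp
  | cons a s ha ih =>
    intro hf hg
    rw [Finset.prod_cons, Finset.prod_cons, Finset.sum_cons]
    have hfa : |f a| ≤ 1 := hf a (Finset.mem_cons_self a s)
    have hga : |g a| ≤ 1 := hg a (Finset.mem_cons_self a s)
    have hf' : ∀ i ∈ s, |f i| ≤ 1 := fun i hi => hf i (Finset.mem_cons.2 (Or.inr hi))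
    have hg' : ∀ i ∈ s, |g i| ≤ 1 := fun i hi => hg i (Finset.mem_cons.2 (Or.inr hi))
    have hpf : |∏ i ∈ s, f i| ≤ 1 := by
      rw [Finset.abs_prod]
      exact Finset.prod_le_one (fun i _ => abs_nonneg _) hf'
    have key : f a * ∏ i ∈ s, f i - g a * ∏ i ∈ s, g i
        = (f a - g a) * ∏ i ∈ s, f i + g a * (∏ i ∈ s, f i - ∏ i ∈ s, g i) := by ring
    rw [key]
    have step1 : |(f a - g a) * ∏ i ∈ s, f i + g a * (∏ i ∈ s, f i - ∏ i ∈ s, g i)|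
        ≤ |(f a - g a) * ∏ i ∈ s, f i| + |g a * (∏ i ∈ s, f i - ∏ i ∈ s, g i)| :=
      abs_add_le _ _
    have step2 : |(f a - g a) * ∏ i ∈ s, f i| ≤ |f a - g a| := by
      rw [abs_mul]
      calc |f a - g a| * |∏ i ∈ s, f i| ≤ |f a - g a| * 1 :=
            mul_le_mul_of_nonneg_left hpf (abs_nonneg _)
        _ = |f a - g a| := mul_one _
    have step3 : |g a * (∏ i ∈ s, f i - ∏ i ∈ s, g i)| ≤ ∑ i ∈ s, |f i - g i| := by
      rw [abs_mul]
      calc |g a| * |∏ i ∈ s, f i - ∏ i ∈ s, g i|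
          ≤ 1 * |∏ i ∈ s, f i - ∏ i ∈ s, g i| :=
            mul_le_mul_of_nonneg_right hga (abs_nonneg _)
        _ = |∏ i ∈ s, f i - ∏ i ∈ s, g i| := one_mul _
        _ ≤ ∑ i ∈ s, |f i - g i| := ih hf' hg'
    linarith

lemma abs_siteProb_le_one {u ν : ℝ} (hu : u ∈ Set.Icc (0:ℝ) 1)
    (hν : ν ∈ Set.Icc (0:ℝ) 1) (pc cc : Bool) : |siteProb u ν pc cc| ≤ 1 := by
  obtain ⟨hu0, hu1⟩ := hu
  obtain ⟨hν0, hν1⟩ := hν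
  cases pc <;> cases cc <;> simp [siteProb, abs_le, -abs_mul] <;>
    constructor <;> nlinarith

lemma abs_siteProb_sub {u ν : ℝ} (hu : 0 ≤ u) (hν : ν ∈ Set.Icc (0:ℝ) 1)
    (pc cc : Bool) : |siteProb u ν pc cc - siteProb 0 ν pc cc| ≤ u := by
  obtain ⟨hν0, hν1⟩ := hν
  cases pc <;> cases cc <;> simp [siteProb, abs_le, -abs_mul] <;>
    constructor <;> nlinarith

lemma abs_step_sub_le {p : PopState G → RepEvent G → ℝ} (hp : IsRule p) {u ν : ℝ}
    (hu : u ∈ Set.Icc (0:ℝ) 1) (hν : ν ∈ Set.Icc (0:ℝ) 1) (x y : PopState G) :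
    |step p u ν x y - step p 0 ν x y| ≤ (Fintype.card G : ℝ) * u := by
  unfold step
  rw [← Finset.sum_sub_distrib]
  refine (Finset.abs_sum_le_sum_abs _ _).trans ?_
  have hbound : ∀ e : RepEvent G,
      |p x e * (if y \ e.1 = x \ e.1 then
          ∏ g ∈ e.1.attach, siteProb u ν (decide (e.2 g ∈ x)) (decide (g.1 ∈ y)) else 0)
        - p x e * (if y \ e.1 = x \ e.1 then
          ∏ g ∈ e.1.attach, siteProb 0 ν (decide (e.2 g ∈ x)) (decide (g.1 ∈ y)) else 0)|
      ≤ p x e * ((Fintype.card G : ℝ) * u) := by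
    intro e
    rw [← mul_sub, abs_mul, abs_of_nonneg (hp.1 x e)]
    refine mul_le_mul_of_nonneg_left ?_ (hp.1 x e)
    by_cases hc : y \ e.1 = x \ e.1
    · rw [if_pos hc, if_pos hc]
      refine (abs_prod_sub_prod_le _ _ _
        (fun g _ => abs_siteProb_le_one hu hν _ _)
        (fun g _ => abs_siteProb_le_one ⟨le_refl 0, zero_le_one⟩ hν _ _)).trans ?_
      calc ∑ g ∈ e.1.attach,
            |siteProb u ν (decide (e.2 g ∈ x)) (decide (g.1 ∈ y))
              - siteProb 0 ν (decide (e.2 g ∈ x)) (decide (g.1 ∈ y))|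
          ≤ ∑ _g ∈ e.1.attach, u :=
            Finset.sum_le_sum fun g _ => abs_siteProb_sub hu.1 hν _ _
        _ = (e.1.attach.card : ℝ) * u := by rw [Finset.sum_const, nsmul_eq_mul]
        _ ≤ (Fintype.card G : ℝ) * u := by
            refine mul_le_mul_of_nonneg_right ?_ hu.1
            rw [Finset.card_attach]
            exact_mod_cast Finset.card_le_univ e.1
    · rw [if_neg hc, if_neg hc]
      simp only [sub_zero, abs_zero]
      exact mul_nonneg (Nat.cast_nonneg _) hu.1
  refine (Finset.sum_le_sum fun e _ => hbound e).trans ?_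
  rw [← Finset.sum_mul, hp.2 x, one_mul]

lemma continuous_step (p : PopState G → RepEvent G → ℝ) (ν : ℝ) (x y : PopState G) :
    Continuous fun u : ℝ => step p u ν x y := by
  unfold step
  refine continuous_finset_sum _ fun e _ => Continuous.mul continuous_const ?_
  by_cases hc : y \ e.1 = x \ e.1
  · simp only [if_pos hc]
    refine continuous_finset_prod _ fun g _ => ?_
    unfold siteProb
    refine Continuous.add ?_ ?_
    · split
      · exact continuous_const.sub continuous_id
      · exact continuous_const
    · split
      · exact continuous_id.mul continuous_const
      · exact continuous_id.mul continuous_const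
  · simp only [if_neg hc]
    exact continuous_const

section Rho

variable {p : PopState G → RepEvent G → ℝ} {ν : ℝ}
variable (hp : IsRule p)
include hp

lemma rhoA_eq [Nonempty G] :
    rhoA p ν = ∑ g : G, (dProb p g ∅ / bTot p ∅) * phiA p ν {g} := by
  unfold rhoA
  have hlim : ∀ x : PopState G,
      limUnder atTop (fun t => iterKer (step p 0 ν) t x Finset.univ) = phiA p ν x := by
    intro x
    refine Tendsto.limUnder_eq ?_
    have heq : ∀ t : ℕ, iterKer (step p 0 ν) t x Finset.univ
        = (M p 0 ν ^ t) x Finset.univ := fun t => iterKer_eq_pow p 0 ν t x _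
    rw [tendsto_congr heq]
    exact tendsto_phiA hp x
  rw [Finset.sum_congr rfl fun x _ => by rw [hlim x]]
  unfold muA
  rw [Finset.sum_congr rfl fun x _ => by
    rw [Finset.sum_mul (f := fun g : G => if x = {g} then dProb p g ∅ / bTot p ∅ else 0)]]
  rw [Finset.sum_comm]
  refine Finset.sum_congr rfl fun g _ => ?_
  rw [Finset.sum_congr rfl fun x _ => by rw [ite_mul, zero_mul]]
  rw [Finset.sum_ite_eq' Finset.univ ({g} : PopState G)
    (fun x => dProb p g ∅ / bTot p ∅ * phiA p ν x), if_pos (Finset.mem_univ _)]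

lemma rhoa_eq [Nonempty G] :
    rhoa p ν = ∑ g : G, (dProb p g Finset.univ / bTot p Finset.univ)
      * phia p ν (Finset.univ \ {g}) := by
  unfold rhoa
  have hlim : ∀ x : PopState G,
      limUnder atTop (fun t => iterKer (step p 0 ν) t x ∅) = phia p ν x := by
    intro x
    refine Tendsto.limUnder_eq ?_
    have heq : ∀ t : ℕ, iterKer (step p 0 ν) t x ∅
        = (M p 0 ν ^ t) x ∅ := fun t => iterKer_eq_pow p 0 ν t x _
    rw [tendsto_congr heq]
    exact tendsto_phia hp x
  rw [Finset.sum_congr rfl fun x _ => by rw [hlim x]]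
  unfold mua
  rw [Finset.sum_congr rfl fun x _ => by
    rw [Finset.sum_mul (f := fun g : G =>
      if x = Finset.univ \ {g} then dProb p g Finset.univ / bTot p Finset.univ else 0)]]
  rw [Finset.sum_comm]
  refine Finset.sum_congr rfl fun g _ => ?_
  rw [Finset.sum_congr rfl fun x _ => by rw [ite_mul, zero_mul]]
  rw [Finset.sum_ite_eq' Finset.univ (Finset.univ \ {g} : PopState G)
    (fun x => dProb p g Finset.univ / bTot p Finset.univ * phia p ν x),
    if_pos (Finset.mem_univ _)]

lemma sum_cafun_phiA [Nonempty G] (hba : bTot p ∅ ≠ 0) :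
    ∑ y, cafun p ν y * phiA p ν y = ν * bTot p ∅ * rhoA p ν := by
  unfold cafun
  rw [Finset.sum_congr rfl fun y _ => by rw [add_mul, mul_assoc,
    ite_mul, zero_mul, Finset.sum_mul (f := fun g : G => if y = {g} then dProb p g ∅ else 0)]]
  rw [Finset.sum_add_distrib]
  have h1 : ∑ y, (if y = (∅ : PopState G) then -(ν * bTot p ∅) * phiA p ν y else 0) = 0 := by
    rw [Finset.sum_ite_eq' Finset.univ (∅ : PopState G)
      (fun y => -(ν * bTot p ∅) * phiA p ν y), if_pos (Finset.mem_univ _),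
      phiA_empty hp, mul_zero]
  have h2 : ∑ y, ν * (∑ g : G, (if y = ({g} : PopState G) then dProb p g ∅ else 0)
        * phiA p ν y)
      = ν * ∑ g : G, dProb p g ∅ * phiA p ν ({g} : PopState G) := by
    rw [← Finset.mul_sum]
    congr 1
    rw [Finset.sum_comm]
    refine Finset.sum_congr rfl fun g _ => ?_
    rw [Finset.sum_congr rfl fun y _ => by rw [ite_mul, zero_mul]]
    rw [Finset.sum_ite_eq' Finset.univ ({g} : PopState G)
      (fun y => dProb p g ∅ * phiA p ν y), if_pos (Finset.mem_univ _)]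
  rw [h1, h2, zero_add]
  have h3 : ∑ g : G, dProb p g ∅ * phiA p ν ({g} : PopState G)
      = bTot p ∅ * rhoA p ν := by
    rw [rhoA_eq hp, Finset.mul_sum]
    refine Finset.sum_congr rfl fun g _ => ?_
    field_simp
  rw [h3]
  ring

lemma sum_cAfun_phiA [Nonempty G] (hbA : bTot p Finset.univ ≠ 0)
    (htR : Tendsto (RFun p ν) atTop (nhds 0)) :
    ∑ y, cAfun p ν y * phiA p ν y
      = -((1-ν) * bTot p Finset.univ * rhoa p ν) := by
  unfold cAfun
  rw [Finset.sum_congr rfl fun y _ => by rw [add_mul, mul_assoc,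
    ite_mul, zero_mul, Finset.sum_mul (f := fun g : G =>
      if y = Finset.univ \ {g} then dProb p g Finset.univ else 0)]]
  rw [Finset.sum_add_distrib]
  have h1 : ∑ y, (if y = (Finset.univ : PopState G)
        then -((1-ν) * bTot p Finset.univ) * phiA p ν y else 0)
      = -((1-ν) * bTot p Finset.univ) := by
    rw [Finset.sum_ite_eq' Finset.univ (Finset.univ : PopState G)
      (fun y => -((1-ν) * bTot p Finset.univ) * phiA p ν y), if_pos (Finset.mem_univ _),
      phiA_univ hp, mul_one]
  have h2 : ∑ y, (1-ν) * (∑ g : G,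
        (if y = (Finset.univ \ {g} : PopState G) then dProb p g Finset.univ else 0)
        * phiA p ν y)
      = (1-ν) * ∑ g : G, dProb p g Finset.univ * phiA p ν (Finset.univ \ {g}) := by
    rw [← Finset.mul_sum]
    congr 1
    rw [Finset.sum_comm]
    refine Finset.sum_congr rfl fun g _ => ?_
    rw [Finset.sum_congr rfl fun y _ => by rw [ite_mul, zero_mul]]
    rw [Finset.sum_ite_eq' Finset.univ (Finset.univ \ {g} : PopState G)
      (fun y => dProb p g Finset.univ * phiA p ν y), if_pos (Finset.mem_univ _)]
  rw [h1, h2]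
  have h3 : ∑ g : G, dProb p g Finset.univ * phiA p ν (Finset.univ \ {g})
      = bTot p Finset.univ - bTot p Finset.univ * rhoa p ν := by
    have h4 : ∀ g : G, phiA p ν (Finset.univ \ {g})
        = 1 - phia p ν (Finset.univ \ {g}) := by
      intro g
      have := phi_add hp htR (Finset.univ \ {g})
      linarith
    rw [Finset.sum_congr rfl fun g _ => by rw [h4 g]]
    have h5 : ∑ g : G, dProb p g Finset.univ * phia p ν (Finset.univ \ {g})
        = bTot p Finset.univ * rhoa p ν := by
      rw [rhoa_eq hp, Finset.mul_sum]
      refine Finset.sum_congr rfl fun g _ => ?_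
      field_simp
    rw [Finset.sum_congr rfl fun g _ => by rw [mul_sub, mul_one]]
    rw [Finset.sum_sub_distrib, h5, ← bTot_eq_sum_dProb]
  rw [h3]
  ring

end Rho

end Aux9

end NatSel
namespace NatSel

section Aux10

open Filter Topology

variable {G : Type} [Fintype G] [DecidableEq G]
set_option linter.unusedSectionVars false
set_option maxHeartbeats 1000000

lemma key_limit [Nonempty G]
    (p : PopState G → RepEvent G → ℝ) (hrule : IsRule p) (hfix : FixationAxiom p)
    (ν : ℝ) (hν : 0 < ν) (hν1 : ν < 1)
    (π : ℝ → PopState G → ℝ) (hπ : IsMSSFamily p ν π)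
    (v : ℕ → ℝ) (hv : Tendsto v atTop (nhdsWithin 0 (Set.Ioi 0)))
    (L : PopState G → ℝ) (hL : ∀ x, Tendsto (fun k => π (v k) x) atTop (nhds (L x))) :
    ∀ x : PopState G, L x =
      (if x = Finset.univ then
        ν * bTot p ∅ * rhoA p ν /
          (ν * bTot p ∅ * rhoA p ν + (1 - ν) * bTot p Finset.univ * rhoa p ν)
      else if x = ∅ then
        (1 - ν) * bTot p Finset.univ * rhoa p ν /
          (ν * bTot p ∅ * rhoA p ν + (1 - ν) * bTot p Finset.univ * rhoa p ν)
      else 0) := by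
  classical
  obtain ⟨htR, g0, hd0, hdU, hphiA0, hphia0, hba, hbA⟩ :=
    fixation_package (ν := ν) hrule hfix
  have hv0 : Tendsto v atTop (nhds 0) := hv.mono_right nhdsWithin_le_nhds
  have h1 : ∀ᶠ k in atTop, v k ∈ Set.Ioi (0:ℝ) := hv self_mem_nhdsWithin
  have h2 : ∀ᶠ k in atTop, v k < 1 := hv0.eventually_lt_const (by norm_num : (0:ℝ) < 1)
  have hmem : ∀ᶠ k in atTop, v k ∈ Set.Ioc (0:ℝ) 1 :=
    (h1.and h2).mono fun k hk => ⟨hk.1, hk.2.le⟩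
  have hL0 : ∀ x, 0 ≤ L x := fun x =>
    ge_of_tendsto (hL x) (hmem.mono fun k hk => (hπ _ hk).1 x)
  have hsumL : ∑ x, L x = 1 := by
    have hs : Tendsto (fun k => ∑ x, π (v k) x) atTop (nhds (∑ x, L x)) :=
      tendsto_finset_sum _ fun x _ => hL x
    have hs1 : (fun k => ∑ x, π (v k) x) =ᶠ[atTop] fun _ => (1:ℝ) :=
      hmem.mono fun k hk => (hπ _ hk).2.1
    exact tendsto_nhds_unique (Tendsto.congr' hs1 hs) tendsto_const_nhds
  -- the limit is stationary for the mutation-free chain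
  have hstat : ∀ y, L y = ∑ x, L x * M p 0 ν x y := by
    intro y
    have ha : Tendsto (fun k => ∑ x, π (v k) x * step p (v k) ν x y) atTop
        (nhds (∑ x, L x * step p 0 ν x y)) :=
      tendsto_finset_sum _ fun x _ =>
        (hL x).mul (((continuous_step p ν x y).tendsto 0).comp hv0)
    have hb : (fun k => ∑ x, π (v k) x * step p (v k) ν x y)
        =ᶠ[atTop] fun k => π (v k) y :=
      hmem.mono fun k hk => ((hπ _ hk).2.2 y).symm
    exact tendsto_nhds_unique (hL y) (Tendsto.congr' hb ha)
  have hLpow : ∀ (t : ℕ) (y : PopState G), L y = ∑ x, L x * (M p 0 ν ^ t) x y := by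
    intro t
    induction t with
    | zero =>
      intro y
      simp only [pow_zero, Matrix.one_apply]
      rw [Finset.sum_congr rfl fun x _ => by rw [mul_ite, mul_one, mul_zero]]
      rw [Finset.sum_ite_eq' Finset.univ y L, if_pos (Finset.mem_univ _)]
    | succ t ih =>
      intro y
      calc L y = ∑ z, L z * M p 0 ν z y := hstat y
        _ = ∑ z, (∑ x, L x * (M p 0 ν ^ t) x z) * M p 0 ν z y :=
            Finset.sum_congr rfl fun z _ => by rw [← ih z]
        _ = ∑ x, L x * (M p 0 ν ^ (t+1)) x y := by
            rw [Finset.sum_congr rfl fun z _ => Finset.sum_mul _ _ _]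
            rw [Finset.sum_comm]
            refine Finset.sum_congr rfl fun x _ => ?_
            rw [pow_succ, Matrix.mul_apply, Finset.mul_sum]
            exact Finset.sum_congr rfl fun z _ => by ring
  have hLoff : ∀ z ∈ offStates G, L z = 0 := by
    intro z hz
    have hub : ∀ t : ℕ, L z ≤ RFun p ν t := by
      intro t
      calc L z = ∑ x, L x * (M p 0 ν ^ t) x z := hLpow t z
        _ ≤ ∑ x, L x * RFun p ν t := by
            refine Finset.sum_le_sum fun x _ => mul_le_mul_of_nonneg_left ?_ (hL0 x)
            refine le_trans ?_ (rFun_le_R t x)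
            exact Finset.single_le_sum (f := fun w => (M p 0 ν ^ t) x w)
              (fun w _ => M0_pow_nonneg hrule t x w) hz
        _ = RFun p ν t := by rw [← Finset.sum_mul, hsumL, one_mul]
    have hle : L z ≤ 0 := ge_of_tendsto htR (Filter.Eventually.of_forall hub)
    exact le_antisymm hle (hL0 z)
  -- the balance identity
  set q : ℝ → PopState G → ℝ :=
    fun u x => ∑ y, (step p u ν x y - step p 0 ν x y) * phiA p ν y with hqdef
  have hident : (fun k => ∑ x, π (v k) x * (q (v k) x / v k)) =ᶠ[atTop]
      fun _ => (0:ℝ) := by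
    refine hmem.mono fun k hk => ?_
    have hq0 : ∑ x, π (v k) x * q (v k) x = 0 := by
      have hqx : ∀ x, q (v k) x = (∑ y, step p (v k) ν x y * phiA p ν y)
          - ∑ y, step p 0 ν x y * phiA p ν y := by
        intro x
        rw [hqdef]
        rw [← Finset.sum_sub_distrib]
        exact Finset.sum_congr rfl fun y _ => by ring
      rw [Finset.sum_congr rfl fun x _ => by rw [hqx x, mul_sub]]
      rw [Finset.sum_sub_distrib]
      have hA : ∑ x, π (v k) x * ∑ y, step p (v k) ν x y * phiA p ν y
          = ∑ y, π (v k) y * phiA p ν y := by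
        rw [Finset.sum_congr rfl fun x _ => Finset.mul_sum _ _ _]
        rw [Finset.sum_comm]
        refine Finset.sum_congr rfl fun y _ => ?_
        rw [(hπ _ hk).2.2 y, Finset.sum_mul]
        exact Finset.sum_congr rfl fun x _ => by ring
      have hB : ∑ x, π (v k) x * ∑ y, step p 0 ν x y * phiA p ν y
          = ∑ x, π (v k) x * phiA p ν x := by
        refine Finset.sum_congr rfl fun x _ => ?_
        exact congrArg (fun r => π (v k) x * r) (phiA_harmonic hrule x).symm
      rw [hA, hB, sub_eq_zero]
    have hdv : ∑ x, π (v k) x * (q (v k) x / v k)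
        = (∑ x, π (v k) x * q (v k) x) / v k := by
      rw [Finset.sum_div]
      exact Finset.sum_congr rfl fun x _ => (mul_div_assoc _ _ _).symm
    show ∑ x, π (v k) x * (q (v k) x / v k) = (0:ℝ)
    rw [hdv, hq0, zero_div]
  -- limits of the three blocks
  have hqA : Tendsto (fun k => q (v k) Finset.univ / v k) atTop
      (nhds (∑ y, cAfun p ν y * phiA p ν y)) := by
    have hre : ∀ k, q (v k) Finset.univ / v k
        = ∑ y, ((step p (v k) ν Finset.univ y - step p 0 ν Finset.univ y) / v k)
            * phiA p ν y := by
      intro k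
      rw [hqdef, Finset.sum_div]
      exact Finset.sum_congr rfl fun y _ => (div_mul_eq_mul_div _ _ _).symm
    rw [funext hre]
    exact tendsto_finset_sum _ fun y _ =>
      Tendsto.mul_const _ ((tendsto_slope_univ p ν y).comp hv)
  have hqa : Tendsto (fun k => q (v k) ∅ / v k) atTop
      (nhds (∑ y, cafun p ν y * phiA p ν y)) := by
    have hre : ∀ k, q (v k) ∅ / v k
        = ∑ y, ((step p (v k) ν ∅ y - step p 0 ν ∅ y) / v k) * phiA p ν y := by
      intro k
      rw [hqdef, Finset.sum_div]
      exact Finset.sum_congr rfl fun y _ => (div_mul_eq_mul_div _ _ _).symm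
    rw [funext hre]
    exact tendsto_finset_sum _ fun y _ =>
      Tendsto.mul_const _ ((tendsto_slope_empty p ν y).comp hv)
  have hoff : ∀ x ∈ offStates G, Tendsto (fun k => π (v k) x * (q (v k) x / v k))
      atTop (nhds 0) := by
    intro x hx
    set C : ℝ := (Fintype.card (PopState G) : ℝ) * (Fintype.card G : ℝ) with hC
    have hCnn : 0 ≤ C := by rw [hC]; positivity
    have hqb : ∀ᶠ k in atTop, ‖π (v k) x * (q (v k) x / v k)‖
        ≤ π (v k) x * C := by
      refine hmem.mono fun k hk => ?_
      have hqabs : |q (v k) x| ≤ (Fintype.card (PopState G) : ℝ)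
          * ((Fintype.card G : ℝ) * v k) := by
        rw [hqdef]
        refine (Finset.abs_sum_le_sum_abs _ _).trans ?_
        have hb : ∀ y : PopState G,
            |(step p (v k) ν x y - step p 0 ν x y) * phiA p ν y|
            ≤ (Fintype.card G : ℝ) * v k := by
          intro y
          rw [abs_mul]
          calc |step p (v k) ν x y - step p 0 ν x y| * |phiA p ν y|
              ≤ ((Fintype.card G : ℝ) * v k) * 1 := by
                refine mul_le_mul ?_ ?_ (abs_nonneg _) ?_
                · exact abs_step_sub_le hrule ⟨hk.1.le, hk.2⟩ ⟨hν.le, hν1.le⟩ x y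
                · rw [abs_of_nonneg (phiA_nonneg hrule y)]
                  exact phiA_le_one hrule y
                · exact mul_nonneg (Nat.cast_nonneg _) hk.1.le
            _ = (Fintype.card G : ℝ) * v k := mul_one _
        calc ∑ y, |(step p (v k) ν x y - step p 0 ν x y) * phiA p ν y|
            ≤ ∑ _y : PopState G, (Fintype.card G : ℝ) * v k :=
              Finset.sum_le_sum fun y _ => hb y
          _ = (Fintype.card (PopState G) : ℝ) * ((Fintype.card G : ℝ) * v k) := by
              rw [Finset.sum_const, nsmul_eq_mul, Finset.card_univ]
      have hvk : 0 < v k := hk.1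
      rw [norm_mul, norm_div]
      rw [Real.norm_eq_abs, Real.norm_eq_abs, Real.norm_eq_abs]
      rw [abs_of_nonneg ((hπ _ hk).1 x), abs_of_pos hvk]
      refine mul_le_mul_of_nonneg_left ?_ ((hπ _ hk).1 x)
      rw [div_le_iff₀ hvk, hC]
      calc |q (v k) x| ≤ (Fintype.card (PopState G) : ℝ)
            * ((Fintype.card G : ℝ) * v k) := hqabs
        _ = (Fintype.card (PopState G) : ℝ) * (Fintype.card G : ℝ) * v k := by ring
    have hπC : Tendsto (fun k => π (v k) x * C) atTop (nhds 0) := by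
      have := (hL x).mul_const C
      rwa [hLoff x hx, zero_mul] at this
    exact squeeze_zero_norm' hqb hπC
  -- assemble the three blocks
  set SA : ℝ := ∑ y, cAfun p ν y * phiA p ν y with hSA
  set Sa : ℝ := ∑ y, cafun p ν y * phiA p ν y with hSa
  have hsplit : (fun k => ∑ x, π (v k) x * (q (v k) x / v k))
      = fun k => (π (v k) Finset.univ * (q (v k) Finset.univ / v k)
          + π (v k) ∅ * (q (v k) ∅ / v k))
        + ∑ x ∈ offStates G, π (v k) x * (q (v k) x / v k) := by
    funext k
    rw [sum_split (fun x => π (v k) x * (q (v k) x / v k))]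
  have hTend : Tendsto (fun k => ∑ x, π (v k) x * (q (v k) x / v k)) atTop
      (nhds ((L Finset.univ * SA + L ∅ * Sa) + 0)) := by
    rw [hsplit]
    refine Tendsto.add (Tendsto.add ?_ ?_) ?_
    · exact (hL Finset.univ).mul hqA
    · exact (hL ∅).mul hqa
    · have hz : Tendsto (fun k => ∑ x ∈ offStates G, π (v k) x * (q (v k) x / v k))
          atTop (nhds (∑ x ∈ offStates G, (0:ℝ))) :=
        tendsto_finset_sum _ fun x hx => hoff x hx
      simpa using hz
  have hmain : L Finset.univ * SA + L ∅ * Sa = 0 := by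
    have h0 := tendsto_nhds_unique (Tendsto.congr' hident hTend) tendsto_const_nhds
    linarith [h0]
  rw [hSA, sum_cAfun_phiA hrule (ne_of_gt hbA) htR] at hmain
  rw [hSa, sum_cafun_phiA hrule (ne_of_gt hba)] at hmain
  -- positivity of the two rates
  have hrhoA : 0 < rhoA p ν := by
    rw [rhoA_eq hrule]
    refine Finset.sum_pos' (fun g _ => mul_nonneg (div_nonneg (dProb_nonneg hrule g ∅) hba.le)
      (phiA_nonneg hrule _)) ⟨g0, Finset.mem_univ g0, ?_⟩
    exact mul_pos (div_pos hd0 hba) hphiA0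
  have hrhoa : 0 < rhoa p ν := by
    rw [rhoa_eq hrule]
    refine Finset.sum_pos' (fun g _ => mul_nonneg
      (div_nonneg (dProb_nonneg hrule g Finset.univ) hbA.le) (phia_nonneg hrule _))
      ⟨g0, Finset.mem_univ g0, ?_⟩
    exact mul_pos (div_pos hdU hbA) hphia0
  set α : ℝ := ν * bTot p ∅ * rhoA p ν with hαdef
  set β : ℝ := (1 - ν) * bTot p Finset.univ * rhoa p ν with hβdef
  have hαpos : 0 < α := by rw [hαdef]; positivity
  have hβpos : 0 < β := by
    rw [hβdef]
    have : 0 < 1 - ν := by linarith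
    positivity
  have hbal : L Finset.univ * β = L ∅ * α := by
    linear_combination -hmain
  have hone : L Finset.univ + L ∅ = 1 := by
    have := sum_split L
    rw [hsumL] at this
    have hz : ∑ x ∈ offStates G, L x = 0 :=
      Finset.sum_eq_zero fun x hx => hLoff x hx
    rw [hz] at this
    linarith
  have hLU : L Finset.univ = α / (α + β) := by
    rw [eq_div_iff (by positivity : α + β ≠ 0)]
    linear_combination hbal + α * hone
  have hLe : L ∅ = β / (α + β) := by
    rw [eq_div_iff (by positivity : α + β ≠ 0)]
    linear_combination -hbal + β * hone
  intro x
  by_cases hxu : x = Finset.univ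
  · subst hxu
    rw [if_pos rfl]
    exact hLU
  · by_cases hxe : x = ∅
    · subst hxe
      rw [if_neg (fun h => hxu h), if_pos rfl]
      exact hLe
    · rw [if_neg hxu, if_neg hxe]
      exact hLoff x (mem_offStates.2 ⟨hxe, hxu⟩)

end Aux10

end NatSel
/-- Theorem 1 of Allen & McAvoy: for a fixed replacement rule
satisfying the Fixation Axiom and a fixed mutational bias `0 < ν < 1`, the
mutation-selection stationary distribution converges, as `u → 0`, to the
distribution putting mass `ν b(a) ρ_A / (ν b(a) ρ_A + (1−ν) b(A) ρ_a)` on the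
monoallelic state `A`, the complementary mass on `a`, and zero elsewhere. -/
theorem statement1
    {G : Type} [Fintype G] [DecidableEq G] [Nonempty G]
    (p : PopState G → RepEvent G → ℝ) (hrule : IsRule p) (hfix : FixationAxiom p)
    (ν : ℝ) (hν : 0 < ν) (hν1 : ν < 1)
    (π : ℝ → PopState G → ℝ) (hπ : IsMSSFamily p ν π) :
    ∀ x : PopState G,
      Tendsto (fun u => π u x) (nhdsWithin 0 (Set.Ioi 0))
        (nhds
          (if x = Finset.univ then
            ν * bTot p ∅ * rhoA p ν /
              (ν * bTot p ∅ * rhoA p ν + (1 - ν) * bTot p Finset.univ * rhoa p ν)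
          else if x = ∅ then
            (1 - ν) * bTot p Finset.univ * rhoa p ν /
              (ν * bTot p ∅ * rhoA p ν + (1 - ν) * bTot p Finset.univ * rhoa p ν)
          else 0)) := by
  classical
  intro x
  rw [Filter.tendsto_iff_seq_tendsto]
  intro v hv
  refine Filter.tendsto_of_subseq_tendsto fun ns hns => ?_
  have hvns : Tendsto (fun n => v (ns n)) atTop (nhdsWithin 0 (Set.Ioi 0)) :=
    hv.comp hns
  have h1 : ∀ᶠ n in atTop, v (ns n) ∈ Set.Ioi (0:ℝ) := hvns self_mem_nhdsWithin
  have h2 : ∀ᶠ n in atTop, v (ns n) < 1 :=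
    (hvns.mono_right nhdsWithin_le_nhds).eventually_lt_const (by norm_num : (0:ℝ) < 1)
  obtain ⟨N, hN⟩ := Filter.eventually_atTop.1 (h1.and h2)
  set w : ℕ → ℝ := fun n => v (ns (n + N)) with hwdef
  have hwmem : ∀ n, w n ∈ Set.Ioc (0:ℝ) 1 := by
    intro n
    have := hN (n + N) (Nat.le_add_left N n)
    exact ⟨this.1, this.2.le⟩
  have hwt : Tendsto w atTop (nhdsWithin 0 (Set.Ioi 0)) := by
    rw [hwdef]
    exact hvns.comp (tendsto_add_atTop_nat N)
  set Φ : ℕ → (NatSel.PopState G → ℝ) := fun n y => π (w n) y with hΦdef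
  have hΦmem : ∀ n, Φ n ∈ Set.univ.pi (fun _ : NatSel.PopState G => Set.Icc (0:ℝ) 1) := by
    intro n
    rw [Set.mem_univ_pi]
    intro y
    have h := hπ (w n) (hwmem n)
    refine ⟨h.1 y, ?_⟩
    rw [← h.2.1]
    exact Finset.single_le_sum (fun z _ => h.1 z) (Finset.mem_univ y)
  have hcomp : IsCompact (Set.univ.pi fun _ : NatSel.PopState G => Set.Icc (0:ℝ) 1) :=
    isCompact_univ_pi fun _ => isCompact_Icc
  obtain ⟨L, _, φ, hφmono, hφtend⟩ := hcomp.tendsto_subseq hΦmem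
  have hLpt : ∀ y, Tendsto (fun n => π (w (φ n)) y) atTop (nhds (L y)) := by
    intro y
    exact tendsto_pi_nhds.1 hφtend y
  have hwφ : Tendsto (fun n => w (φ n)) atTop (nhdsWithin 0 (Set.Ioi 0)) :=
    hwt.comp hφmono.tendsto_atTop
  have hkey := key_limit p hrule hfix ν hν hν1 π hπ (fun n => w (φ n)) hwφ L hLpt
  refine ⟨fun n => φ n + N, ?_⟩
  have := hLpt x
  rw [hkey x] at this
  exact this
end

section
/- Let the replacement rule represent neutral drift and fix a mutation probability u > 0. Then for every state x ∈ {0,1}^G, the stationary probability π_MSS(x) of the evolutionary Markov chain with mutational bias ν equals the stationary probability π_MSS(x̄) of the evolutionary Markov chain with mutational bias 1 − ν, where x̄_g = 1 − x_g for all g ∈ G. -/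
/-!
Common formal scaffold for "A mathematical formalism for natural selection
with arbitrary spatial and genetic structure" (Allen & McAvoy).

A population is a finite nonempty set `G` of genetic sites.  A state is a
subset of `G` (the set of sites occupied by allele `A`); `∅` is the
monoallelic state `a` and `Finset.univ` is the monoallelic state `A`.
A replacement event is a pair `(R, α)` with `R ⊆ G` and `α : R → G`.
-/

open Filter Topology Set

/-!
Complementing every site exchanges the two alleles, so under neutral drift it conjugates the
chain with bias `1 - ν` into the chain with bias `ν`, and `x ↦ π₂ xᶜ` is stationary for the
latter. That chain has a unique stationary distribution by a Doeblin argument: running through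
the events of the Fixation Axiom, which under neutral drift have the same positive probability in
every state, and mutating each replaced site to `A`, it reaches the all-`A` state from any state
in a fixed number of steps with probability at least some `δ > 0`. Hence the difference of two
stationary distributions, which has total mass `0`, contracts in `ℓ¹` by the factor `1 - δ`.
-/

open NatSel Finset Matrix

theorem Finset.sum_ite_sdiff_eq_prod_attach {S α : Type*} [CommSemiring S] [Fintype α]
    [DecidableEq α] (R x : Finset α) (f : R → Bool → S) :
    ∑ y : Finset α, (if y \ R = x \ R then ∏ g ∈ R.attach, f g (decide (g.1 ∈ y)) else 0) =
      ∏ g ∈ R.attach, (f g true + f g false) := by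
  rw [← univ_eq_attach, Fintype.prod_add, ← sum_filter]
  refine sum_nbij' (fun y => y.subtype (· ∈ R))
    (fun t => x \ R ∪ t.map (Function.Embedding.subtype _)) (by simp) ?_ ?_
    (fun t _ => by ext; simp) ?_
  · intro t _
    refine mem_filter.mpr ⟨mem_univ _, ?_⟩
    ext a
    simp only [mem_sdiff, mem_union, mem_map, Function.Embedding.coe_subtype]
    grind
  · intro y hy
    ext a
    have := Finset.ext_iff.mp (mem_filter.mp hy).2 a
    by_cases ha : a ∈ R
    · simp [ha]
    · simpa [ha] using this.symm
  · intro y _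
    rw [← prod_mul_prod_compl (y.subtype (· ∈ R))]
    congr 1 <;> exact prod_congr rfl fun a ha => by simp_all

theorem Finset.mem_foldl_union {α β : Type*} [DecidableEq α] {f : β → Finset α} {a : α} :
    ∀ (L : List β) (s : Finset α), a ∈ L.foldl (fun t b => t ∪ f b) s ↔ a ∈ s ∨ ∃ b ∈ L, a ∈ f b
  | [], s => by simp
  | b :: L, s => by
    rw [List.foldl_cons, mem_foldl_union L, mem_union, List.exists_mem_cons_iff]
    tauto

theorem List.foldr_comp_apply_eq_self {α : Type*} {a : α} :
    ∀ fs : List (α → α), (∀ f ∈ fs, f a = a) → fs.foldr (· ∘ ·) id a = a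
  | [], _ => rfl
  | f :: fs, h => by
    rw [List.foldr_cons, Function.comp_apply,
      foldr_comp_apply_eq_self fs fun f' hf' => h f' (List.mem_cons_of_mem _ hf')]
    exact h f List.mem_cons_self

namespace Matrix

variable {n : Type*} [Fintype n]

theorem sum_abs_vecMul_le {Q : Matrix n n ℝ} {c : ℝ} (hQ : ∀ i j, 0 ≤ Q i j)
    (hc : ∀ i, ∑ j, Q i j ≤ c) (v : n → ℝ) : ∑ j, |(v ᵥ* Q) j| ≤ c * ∑ i, |v i| :=
  calc ∑ j, |(v ᵥ* Q) j|
      ≤ ∑ j, ∑ i, |v i| * Q i j := sum_le_sum fun j _ =>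
        (abs_sum_le_sum_abs _ _).trans_eq <| sum_congr rfl fun i _ => by
          rw [abs_mul, abs_of_nonneg (hQ i j)]
    _ = ∑ i, |v i| * ∑ j, Q i j := by rw [sum_comm]; simp_rw [mul_sum]
    _ ≤ ∑ i, |v i| * c := sum_le_sum fun i _ => mul_le_mul_of_nonneg_left (hc i) (abs_nonneg _)
    _ = c * ∑ i, |v i| := by rw [mul_sum]; simp_rw [mul_comm]

variable [DecidableEq n]

theorem vecMul_pow_eq_self {R : Type*} [Semiring R] {M : Matrix n n R} {v : n → R}
    (h : v ᵥ* M = v) (k : ℕ) : v ᵥ* M ^ k = v := by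
  induction k with
  | zero => simp
  | succ k ih => rw [pow_succ, ← vecMul_vecMul, ih, h]

theorem eq_zero_of_vecMul_eq_self_of_le_apply {M : Matrix n n ℝ} (hM : M ∈ rowStochastic ℝ n)
    {z : n} {δ : ℝ} (hδ : 0 < δ) (hz : ∀ i, δ ≤ M i z) {v : n → ℝ} (hv : v ᵥ* M = v)
    (hsum : ∑ i, v i = 0) : v = 0 := by
  set Q : Matrix n n ℝ := M - of fun _ j => if j = z then δ else 0
  -- removing mass `δ` from column `z` does not change `v ᵥ* M`, since `v` has total mass `0`
  have hvQ : v ᵥ* Q = v := by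
    rw [vecMul_sub, hv]
    ext j
    simp [vecMul, dotProduct, ← sum_mul, hsum]
  have hQ : ∀ i j, 0 ≤ Q i j := fun i j => by
    by_cases hj : j = z
    · simpa [Q, hj] using hz i
    · simpa [Q, hj] using nonneg_of_mem_rowStochastic hM
  have hQsum : ∀ i, ∑ j, Q i j ≤ 1 - δ := fun i => by
    simp [Q, sum_sub_distrib, sum_row_of_mem_rowStochastic hM]
  have hcontr := sum_abs_vecMul_le hQ hQsum v
  rw [hvQ] at hcontr
  have habs : ∑ i, |v i| = 0 := by
    nlinarith [sum_nonneg fun i (_ : i ∈ Finset.univ) => abs_nonneg (v i)]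
  ext i
  exact abs_eq_zero.mp <|
    (sum_eq_zero_iff_of_nonneg fun i _ => abs_nonneg _).mp habs i (Finset.mem_univ i)

theorem eq_of_vecMul_eq_self_of_le_pow_apply {M : Matrix n n ℝ} (hM : M ∈ rowStochastic ℝ n)
    {m : ℕ} {z : n} {δ : ℝ} (hδ : 0 < δ) (hz : ∀ i, δ ≤ (M ^ m) i z) {v w : n → ℝ}
    (hv : v ᵥ* M = v) (hw : w ᵥ* M = w) (hsum : ∑ i, v i = ∑ i, w i) : v = w :=
  sub_eq_zero.mp <| eq_zero_of_vecMul_eq_self_of_le_apply (pow_mem hM m) hδ hz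
    (by rw [sub_vecMul, vecMul_pow_eq_self hv, vecMul_pow_eq_self hw])
    (by rw [Pi.sub_def, sum_sub_distrib, hsum, sub_self])

theorem prod_le_pow_apply_foldl {β : Type*} {M : Matrix n n ℝ} (hM : M ∈ rowStochastic ℝ n)
    {f : β → n → n} {c : β → ℝ} (hc : ∀ b, 0 ≤ c b) (hf : ∀ b i, c b ≤ M i (f b i))
    (L : List β) (i : n) : (L.map c).prod ≤ (M ^ L.length) i (L.foldl (fun j b => f b j) i) := by
  induction L generalizing i with
  | nil => simp
  | cons b L ih =>
    rw [List.map_cons, List.prod_cons, List.length_cons, pow_succ', mul_apply, List.foldl_cons]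
    calc c b * (L.map c).prod
        ≤ M i (f b i) * (M ^ L.length) (f b i) (L.foldl (fun j b => f b j) (f b i)) :=
          mul_le_mul (hf b i) (ih _) (List.prod_nonneg fun a ha => by
            obtain ⟨b', -, rfl⟩ := List.mem_map.mp ha
            exact hc b') (nonneg_of_mem_rowStochastic hM)
      _ ≤ _ := single_le_sum
          (f := fun j => M i j * (M ^ L.length) j (L.foldl (fun j b => f b j) (f b i)))
          (fun j _ => mul_nonneg (nonneg_of_mem_rowStochastic hM)
          (nonneg_of_mem_rowStochastic (pow_mem hM _))) (Finset.mem_univ (f b i))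

end Matrix

namespace NatSel

variable {u ν : ℝ}

theorem siteProb_nonneg (hu : 0 ≤ u) (hu1 : u ≤ 1) (hν : 0 ≤ ν) (hν1 : ν ≤ 1) (a b : Bool) :
    0 ≤ siteProb u ν a b := by
  cases a <;> cases b <;> simp [siteProb] <;> nlinarith

theorem siteProb_true_add_false (u ν : ℝ) (a : Bool) :
    siteProb u ν a true + siteProb u ν a false = 1 := by
  cases a <;> simp [siteProb] <;> ring

theorem siteProb_one_sub_not (u ν : ℝ) (a b : Bool) :
    siteProb u (1 - ν) (!a) (!b) = siteProb u ν a b := by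
  cases a <;> cases b <;> simp [siteProb]

theorem mul_le_siteProb_true (hu1 : u ≤ 1) (a : Bool) : u * ν ≤ siteProb u ν a true := by
  cases a <;> simp [siteProb]
  linarith

variable {G : Type} [DecidableEq G] {p : PopState G → RepEvent G → ℝ}

def eventStep (u ν : ℝ) (e : RepEvent G) (x y : PopState G) : ℝ :=
  if y \ e.1 = x \ e.1 then
    ∏ g ∈ e.1.attach, siteProb u ν (decide (e.2 g ∈ x)) (decide (g.1 ∈ y))
  else 0

theorem eventStep_nonneg (hu : 0 ≤ u) (hu1 : u ≤ 1) (hν : 0 ≤ ν) (hν1 : ν ≤ 1)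
    (e : RepEvent G) (x y : PopState G) : 0 ≤ eventStep u ν e x y := by
  unfold eventStep
  split
  · exact prod_nonneg fun g _ => siteProb_nonneg hu hu1 hν hν1 _ _
  · exact le_rfl

theorem pow_card_le_eventStep_union (hu : 0 ≤ u) (hu1 : u ≤ 1) (hν : 0 ≤ ν) (e : RepEvent G)
    (x : PopState G) : (u * ν) ^ e.1.card ≤ eventStep u ν e x (x ∪ e.1) := by
  rw [eventStep, if_pos (union_sdiff_right x e.1), ← card_attach, ← prod_const]
  refine prod_le_prod (fun _ _ => mul_nonneg hu hν) fun g _ => ?_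
  simpa [g.2] using mul_le_siteProb_true hu1 (ν := ν) (decide (e.2 g ∈ x))

theorem FixationAxiom.exists_cover (hfix : FixationAxiom p) :
    ∃ L : List (RepEvent G), (∀ e ∈ L, ∀ x, 0 < p x e) ∧ ∀ h, ∃ e ∈ L, h ∈ e.1 := by
  obtain ⟨g, m, -, ev, hpos, ⟨k, hk⟩, hcomp⟩ := hfix
  refine ⟨List.ofFn ev, fun e he => ?_, fun h => ?_⟩
  · obtain ⟨k, rfl⟩ := List.mem_ofFn.mp he
    exact hpos k
  · by_contra! hh
    -- a site outside every replaced set is fixed by every `α̃`, so the composition sends it to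
    -- itself rather than to `g`
    have hfixed : ((List.ofFn ev).map tildeMap).foldr (· ∘ ·) id h = g := by
      rw [List.map_ofFn]
      exact hcomp h
    rw [List.foldr_comp_apply_eq_self] at hfixed
    · exact hh (ev k) (List.mem_ofFn.mpr ⟨k, rfl⟩) (hfixed ▸ hk)
    · simp only [List.mem_map, forall_exists_index, and_imp]
      rintro _ e he rfl
      exact dif_neg (hh e he)

variable [Fintype G]

theorem sum_eventStep (u ν : ℝ) (e : RepEvent G) (x : PopState G) :
    ∑ y, eventStep u ν e x y = 1 := by
  simp only [eventStep, sum_ite_sdiff_eq_prod_attach, siteProb_true_add_false, prod_const_one]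

theorem eventStep_one_sub_compl (u ν : ℝ) (e : RepEvent G) (x y : PopState G) :
    eventStep u (1 - ν) e xᶜ yᶜ = eventStep u ν e x y := by
  have hsdiff : yᶜ \ e.1 = xᶜ \ e.1 ↔ y \ e.1 = x \ e.1 := by
    simp only [Finset.ext_iff, Finset.mem_sdiff, Finset.mem_compl]
    exact forall_congr' fun g => by tauto
  simp only [eventStep, hsdiff, Finset.mem_compl, decide_not, siteProb_one_sub_not]

theorem step_eq_sum_eventStep (p : PopState G → RepEvent G → ℝ) (u ν : ℝ) (x y : PopState G) :
    step p u ν x y = ∑ e, p x e * eventStep u ν e x y :=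
  rfl

theorem step_mem_rowStochastic (hp : IsRule p) (hu : 0 ≤ u) (hu1 : u ≤ 1) (hν : 0 ≤ ν)
    (hν1 : ν ≤ 1) : of (step p u ν) ∈ rowStochastic ℝ (PopState G) := by
  refine mem_rowStochastic_iff_sum.mpr ⟨fun x y => ?_, fun x => ?_⟩
  · exact sum_nonneg fun e _ => mul_nonneg (hp.1 x e) (eventStep_nonneg hu hu1 hν hν1 e x y)
  · simp only [of_apply, step_eq_sum_eventStep, sum_comm (γ := PopState G), ← mul_sum,
      sum_eventStep, mul_one, hp.2]

theorem step_one_sub_compl (hp : NeutralDrift p) (u ν : ℝ) (x y : PopState G) :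
    step p u (1 - ν) xᶜ yᶜ = step p u ν x y := by
  simp only [step_eq_sum_eventStep, eventStep_one_sub_compl, hp xᶜ, hp x]

theorem mul_pow_card_le_step_union (hp : ∀ x e, 0 ≤ p x e) (hu : 0 ≤ u) (hu1 : u ≤ 1)
    (hν : 0 ≤ ν) (hν1 : ν ≤ 1) (x : PopState G) (e : RepEvent G) :
    p x e * (u * ν) ^ e.1.card ≤ step p u ν x (x ∪ e.1) :=
  calc p x e * (u * ν) ^ e.1.card
      ≤ p x e * eventStep u ν e x (x ∪ e.1) :=
        mul_le_mul_of_nonneg_left (pow_card_le_eventStep_union hu hu1 hν e x) (hp x e)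
    _ ≤ ∑ e', p x e' * eventStep u ν e' x (x ∪ e.1) :=
        single_le_sum (f := fun e' => p x e' * eventStep u ν e' x (x ∪ e.1))
          (fun e' _ => mul_nonneg (hp x e') (eventStep_nonneg hu hu1 hν hν1 e' x _))
          (Finset.mem_univ e)
    _ = step p u ν x (x ∪ e.1) := (step_eq_sum_eventStep p u ν x _).symm

theorem exists_le_pow_step_apply_univ (hp : IsRule p) (hneut : NeutralDrift p)
    (hfix : FixationAxiom p) (hu : 0 < u) (hu1 : u ≤ 1) (hν : 0 < ν) (hν1 : ν ≤ 1) :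
    ∃ m, ∃ δ > 0, ∀ x, δ ≤ (of (step p u ν) ^ m) x univ := by
  obtain ⟨L, hLpos, hLcover⟩ := hfix.exists_cover
  -- each fixation event, with every replaced site mutating to `A`, adds its replaced set
  have hpath := prod_le_pow_apply_foldl (step_mem_rowStochastic hp hu.le hu1 hν.le hν1)
    (f := fun e x => x ∪ e.1) (c := fun e => p ∅ e * (u * ν) ^ e.1.card)
    (fun e => mul_nonneg (hp.1 ∅ e) (by positivity))
    (fun e x => hneut x e ▸ mul_pow_card_le_step_union hp.1 hu.le hu1 hν.le hν1 x e) L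
  refine ⟨L.length, (L.map fun e => p ∅ e * (u * ν) ^ e.1.card).prod,
    List.prod_pos fun a ha => ?_, fun x => ?_⟩
  · obtain ⟨e, he, rfl⟩ := List.mem_map.mp ha
    exact mul_pos (hLpos e he ∅) (by positivity)
  · convert hpath x
    exact (Finset.eq_univ_iff_forall.mpr fun h =>
      (mem_foldl_union L x).mpr (Or.inr (hLcover h))).symm

end NatSel

theorem statement10_general
    {G : Type} [Fintype G] [DecidableEq G]
    (p : PopState G → RepEvent G → ℝ) (hrule : IsRule p) (hfix : FixationAxiom p)
    (hneut : NeutralDrift p)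
    (u ν : ℝ) (hu : 0 < u) (hu1 : u ≤ 1) (hν : 0 < ν) (hν1 : ν < 1)
    -- `π₁` is the stationary distribution for mutational bias `ν`:
    (π₁ : PopState G → ℝ)
    (hπ₁sum : ∑ x : PopState G, π₁ x = 1)
    (hπ₁stat : ∀ y, π₁ y = ∑ x : PopState G, π₁ x * step p u ν x y)
    -- `π₂` is the stationary distribution for mutational bias `1 − ν`:
    (π₂ : PopState G → ℝ)
    (hπ₂sum : ∑ x : PopState G, π₂ x = 1)
    (hπ₂stat : ∀ y, π₂ y = ∑ x : PopState G, π₂ x * step p u (1 - ν) x y) :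
    ∀ x : PopState G, π₁ x = π₂ xᶜ := by
  obtain ⟨m, δ, hδ, hreach⟩ := exists_le_pow_step_apply_univ hrule hneut hfix hu hu1 hν hν1.le
  let complPerm : Equiv.Perm (PopState G) := Function.Involutive.toPerm _ compl_involutive
  have hconj : of (step p u ν) = (of (step p u (1 - ν))).submatrix complPerm complPerm := by
    ext x y
    exact (step_one_sub_compl hneut u ν x y).symm
  have hπ₂compl : (π₂ ∘ complPerm) ᵥ* of (step p u ν) = π₂ ∘ complPerm := by
    rw [hconj, submatrix_vecMul_equiv, Function.comp_assoc, Equiv.self_comp_symm,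
      Function.comp_id]
    exact congrArg (· ∘ complPerm) (funext fun y => (hπ₂stat y).symm)
  have hsum : ∑ x, π₁ x = ∑ x, (π₂ ∘ complPerm) x := by
    rw [hπ₁sum, Function.comp_def, Equiv.sum_comp complPerm π₂, hπ₂sum]
  exact congrFun <| eq_of_vecMul_eq_self_of_le_pow_apply
    (step_mem_rowStochastic hrule hu.le hu1 hν.le hν1.le) hδ hreach
    (funext fun y => (hπ₁stat y).symm) hπ₂compl hsum

/-- Proposition 3 of Allen & McAvoy: under neutral drift,
for fixed `u > 0`, the stationary probability of state `x` under mutational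
bias `ν` equals the stationary probability of the complement state `x̄` under
mutational bias `1 − ν`. -/
theorem statement10
    {G : Type} [Fintype G] [DecidableEq G] [Nonempty G]
    (p : PopState G → RepEvent G → ℝ) (hrule : IsRule p) (hfix : FixationAxiom p)
    (hneut : NeutralDrift p)
    (u ν : ℝ) (hu : 0 < u) (hu1 : u ≤ 1) (hν : 0 < ν) (hν1 : ν < 1)
    -- `π₁` is the stationary distribution for mutational bias `ν`:
    (π₁ : PopState G → ℝ) (hπ₁pos : ∀ x, 0 ≤ π₁ x)
    (hπ₁sum : ∑ x : PopState G, π₁ x = 1)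
    (hπ₁stat : ∀ y, π₁ y = ∑ x : PopState G, π₁ x * step p u ν x y)
    -- `π₂` is the stationary distribution for mutational bias `1 − ν`:
    (π₂ : PopState G → ℝ) (hπ₂pos : ∀ x, 0 ≤ π₂ x)
    (hπ₂sum : ∑ x : PopState G, π₂ x = 1)
    (hπ₂stat : ∀ y, π₂ y = ∑ x : PopState G, π₂ x * step p u (1 - ν) x y) :
    ∀ x : PopState G, π₁ x = π₂ xᶜ :=
  statement10_general p hrule hfix hneut u ν hu hu1 hν hν1 π₁ hπ₁sum hπ₁stat π₂ hπ₂sum hπ₂stat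
end
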